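/- arXiv:1606.05172 — 8 statements merged into one kernel-verified Lean document; each statement's English description precedes it below -/
import Mathlib

section
/- If f : {0,1}^n → {0,1}^n is a Boolean network whose interaction graph G(f) is acyclic, then f has a unique fixed point. -/
/-- One asynchronous update step of the Boolean network `f`. -/
def Step {I : Type*} [DecidableEq I] (f : (I → Bool) → I → Bool) (x y : I → Bool) : Prop :=
  ∃ i, f x i ≠ x i ∧ y = Function.update x i (f x i)

/-- `Γ(f)` has a path from `x` to `y` of length `l`. -/
def PathLen {I : Type*} [DecidableEq I] (f : (I → Bool) → I → Bool)
    (x y : I → Bool) (l : ℕ) : Prop :=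
  ∃ p : ℕ → I → Bool, p 0 = x ∧ p l = y ∧ ∀ k < l, Step f (p k) (p (k + 1))

/-- Positive arc from `j` to `i` in the interaction graph `G(f)`. -/
def PosArc {n : ℕ} (f : (Fin n → Bool) → Fin n → Bool) (j i : Fin n) : Prop :=
  ∃ x, f (Function.update x j true) i = true ∧ f (Function.update x j false) i = false

/-- Negative arc from `j` to `i` in the interaction graph `G(f)`. -/
def NegArc {n : ℕ} (f : (Fin n → Bool) → Fin n → Bool) (j i : Fin n) : Prop :=
  ∃ x, f (Function.update x j true) i = false ∧ f (Function.update x j false) i = true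

/-- Arc in the underlying unsigned digraph of `G(f)`. -/
def Arc {n : ℕ} (f : (Fin n → Bool) → Fin n → Bool) (j i : Fin n) : Prop :=
  PosArc f j i ∨ NegArc f j i

/-- The interaction graph `G(f)` is acyclic (no directed cycle, including loops). -/
def AcyclicIG {n : ℕ} (f : (Fin n → Bool) → Fin n → Bool) : Prop :=
  ∀ i, ¬ Relation.TransGen (Arc f) i i

/-- Hamming distance. -/
def ham {n : ℕ} (x y : Fin n → Bool) : ℕ :=
  (Finset.univ.filter fun i => x i ≠ y i).card

/-- Componentwise negation. -/
def negc {n : ℕ} (x : Fin n → Bool) : Fin n → Bool := fun i => !(x i)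

/-- Number of ones (weight). -/
def wt {n : ℕ} (x : Fin n → Bool) : ℕ :=
  (Finset.univ.filter fun i => x i = true).card

/-- `x` with coordinate `i` flipped. -/
def flipAt {n : ℕ} (x : Fin n → Bool) (i : Fin n) : Fin n → Bool :=
  Function.update x i (!(x i))

/-- `G(f)` has no negative loops. -/
def NoNegLoop {n : ℕ} (f : (Fin n → Bool) → Fin n → Bool) : Prop :=
  ∀ i, ¬ NegArc f i i

/-- First-half components of the embedding construction `f'`. -/
def F1 {n : ℕ} (f : (Fin n → Bool) → Fin n → Bool) (x y : Fin n → Bool) (i : Fin n) : Bool :=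
  if y = negc x ∨ flipAt y i = negc x then f x i
  else if wt x + wt y = n then !(x i)
  else if wt x + wt y = n + 1 then true
  else if wt x + wt y + 1 = n then false
  else if n + 2 ≤ wt x + wt y then true
  else false

/-- The embedding construction `f' : {0,1}^{2n} → {0,1}^{2n}`, with the `2n`
coordinates indexed by `Fin n ⊕ Fin n`. -/
def Fext {n : ℕ} (f : (Fin n → Bool) → Fin n → Bool) (z : (Fin n ⊕ Fin n) → Bool) :
    (Fin n ⊕ Fin n) → Bool :=
  Sum.elim (fun i => F1 f (z ∘ Sum.inl) (z ∘ Sum.inr) i)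
           (fun i => !(F1 f (negc (z ∘ Sum.inr)) (negc (z ∘ Sum.inl)) i))

/-- Concatenation `(x, y) ∈ {0,1}^{2n}`. -/
def pair {n : ℕ} (x y : Fin n → Bool) : (Fin n ⊕ Fin n) → Bool := Sum.elim x y

/-!
The arc relation of an acyclic interaction graph is well founded, and the `i`-th component of `f`
depends only on the in-neighbours of `i`. So a fixed point is forced coordinate by coordinate along
a topological order of `G(f)`: well-founded induction gives uniqueness, well-founded recursion
gives existence.
-/

open Function Relation

section InteractionGraph

variable {n : ℕ} {f : (Fin n → Bool) → Fin n → Bool} {i j : Fin n}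

lemma apply_update_eq_of_not_arc (h : ¬ Arc f j i) (x : Fin n → Bool) (b c : Bool) :
    f (update x j b) i = f (update x j c) i := by
  have htf : f (update x j true) i = f (update x j false) i := by
    simp only [Arc, PosArc, NegArc, not_or, not_exists, not_and] at h
    cases ht : f (update x j true) i <;> cases hf : f (update x j false) i <;>
      simp_all
  cases b <;> cases c <;> simp [htf]

lemma apply_eq_of_forall_not_arc {x y : Fin n → Bool}
    (h : ∀ j, x j ≠ y j → ¬ Arc f j i) : f x i = f y i := by
  classical
  suffices key : ∀ (s : Finset (Fin n)) (x : Fin n → Bool),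
      (∀ j ∉ s, x j = y j) → (∀ j ∈ s, ¬ Arc f j i) → f x i = f y i by
    refine key {j | x j ≠ y j} x (by simp) (by simpa using h)
  intro s
  induction s using Finset.induction_on with
  | empty => exact fun x hx _ => by rw [funext fun j => hx j (Finset.notMem_empty j)]
  | insert a s _ ih =>
    intro x hx hs
    calc f x i = f (update x a (y a)) i := by
          simpa using apply_update_eq_of_not_arc (hs a (s.mem_insert_self a)) x (x a) (y a)
      _ = f y i := by
          refine ih _ (fun j hj => ?_) fun j hj => hs j (Finset.mem_insert_of_mem hj)
          rcases eq_or_ne j a with rfl | hja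
          · simp
          · simpa [hja] using hx j (by simp [hja, hj])

lemma AcyclicIG.wellFounded (hG : AcyclicIG f) : WellFounded (Arc f) :=
  haveI : Std.Irrefl (TransGen (Arc f)) := ⟨hG⟩
  Subrelation.wf TransGen.single (Finite.wellFounded_of_trans_of_irrefl _)

lemma AcyclicIG.eq_of_fixed (hG : AcyclicIG f) {x y : Fin n → Bool}
    (hx : f x = x) (hy : f y = y) : x = y := by
  funext i
  induction i using hG.wellFounded.induction with
  | _ i ih =>
    calc x i = f x i := (congrFun hx i).symm
      _ = f y i := apply_eq_of_forall_not_arc fun j hj harc => hj (ih j harc)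
      _ = y i := congrFun hy i

lemma AcyclicIG.exists_fixed (hG : AcyclicIG f) : ∃ x, f x = x := by
  classical
  -- The padding `false` is irrelevant: `f · i` ignores coordinates that are not in-neighbours of `i`.
  let x : Fin n → Bool := hG.wellFounded.fix
    fun i x' => f (fun j => if h : Arc f j i then x' j h else false) i
  have hx : ∀ i, x i = f (fun j => if Arc f j i then x j else false) i :=
    fun i => hG.wellFounded.fix_eq _ i
  refine ⟨x, funext fun i => ?_⟩
  rw [hx i]
  exact apply_eq_of_forall_not_arc fun j hj harc => hj (by simp [harc])

end InteractionGraph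

theorem stmt_0 {n : ℕ} (f : (Fin n → Bool) → Fin n → Bool)
    (hG : AcyclicIG f) : ∃! y, f y = y := by
  obtain ⟨x, hx⟩ := hG.exists_fixed
  exact ⟨x, hx, fun y hy => hG.eq_of_fixed hy hx⟩
end

section
/- If f : {0,1}^n → {0,1}^n is a Boolean network whose interaction graph G(f) is acyclic, then the asynchronous graph Γ(f) is acyclic (has no directed cycle). -/
lemma noArc_indep {n : ℕ} (f : (Fin n → Bool) → Fin n → Bool) {j i : Fin n}
    (h : ¬ Arc f j i) (z : Fin n → Bool) (b : Bool) :
    f (Function.update z j b) i = f z i := by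
  have key : f (Function.update z j true) i = f (Function.update z j false) i := by
    cases hb1 : f (Function.update z j true) i <;>
      cases hb2 : f (Function.update z j false) i
    · rfl
    · exact absurd (Or.inr ⟨z, hb1, hb2⟩) h
    · exact absurd (Or.inl ⟨z, hb1, hb2⟩) h
    · rfl
  have hz : Function.update z j (z j) = z := Function.update_eq_self j z
  conv_rhs => rw [← hz]
  cases b <;> cases hzj : z j <;> first | rfl | exact key | exact key.symm

lemma agree_of_noArc {n : ℕ} (f : (Fin n → Bool) → Fin n → Bool) (i : Fin n) :
    ∀ s : Finset (Fin n), ∀ x y : Fin n → Bool,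
    (∀ j, x j ≠ y j → j ∈ s) → (∀ j ∈ s, ¬ Arc f j i) → f x i = f y i := by
  intro s
  induction s using Finset.induction with
  | empty =>
    intro x y h _
    have hxy : x = y := funext fun j => by
      by_contra hne
      exact absurd (h j hne) (Finset.notMem_empty j)
    rw [hxy]
  | @insert a s ha ih =>
    intro x y h hs
    have h1 : f x i = f (Function.update y a (x a)) i := by
      apply ih
      · intro j hne
        by_cases hja : j = a
        · subst hja
          simp at hne
        · rw [Function.update_of_ne hja] at hne
          rcases Finset.mem_insert.mp (h j hne) with h' | h'
          · exact absurd h' hja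
          · exact h'
      · intro j hj
        exact hs j (Finset.mem_insert_of_mem hj)
    have h2 : f (Function.update y a (x a)) i = f y i :=
      noArc_indep f (hs a (Finset.mem_insert_self a s)) y (x a)
    rw [h1, h2]

lemma transGen_path {I : Type*} [DecidableEq I] (f : (I → Bool) → I → Bool)
    {x y : I → Bool} (h : Relation.TransGen (Step f) x y) :
    ∃ l, 1 ≤ l ∧ PathLen f x y l := by
  induction h with
  | @single b hs =>
    refine ⟨1, le_refl 1, fun k => if k = 0 then x else b, by simp, by simp, ?_⟩
    intro k hk
    interval_cases k
    simpa using hs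
  | @tail b c hab hbc ih =>
    obtain ⟨l, hl1, p, hp0, hpl, hstep⟩ := ih
    refine ⟨l + 1, by omega, fun k => if k ≤ l then p k else c, by simp [hp0], by simp, ?_⟩
    intro k hk
    show Step f (if k ≤ l then p k else c) (if k + 1 ≤ l then p (k + 1) else c)
    by_cases hkl : k < l
    · rw [if_pos (show k ≤ l by omega), if_pos (show k + 1 ≤ l by omega)]
      exact hstep k hkl
    · have hkeq : k = l := by omega
      subst hkeq
      rw [if_pos le_rfl, if_neg (by omega), hpl]
      exact hbc

theorem stmt_1 {n : ℕ} (f : (Fin n → Bool) → Fin n → Bool)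
    (hG : AcyclicIG f) : ∀ x, ¬ Relation.TransGen (Step f) x x := by
  intro x hcyc
  obtain ⟨l, hl1, p, hp0, hpl, hstep⟩ := transGen_path f hcyc
  -- set of coordinates flipped along the cycle
  set S : Set (Fin n) := {i | ∃ k, k < l ∧ p k i ≠ p (k + 1) i} with hS
  -- per-step coordinate behavior
  have hcoord : ∀ k, k < l → ∀ j, p (k + 1) j = p k j ∨
      (p (k + 1) j = f (p k) j ∧ f (p k) j ≠ p k j) := by
    intro k hk j
    obtain ⟨m, hm, hup⟩ := hstep k hk
    by_cases hjm : j = m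
    · subst hjm
      right
      rw [hup]
      exact ⟨by simp, hm⟩
    · left
      rw [hup, Function.update_of_ne hjm]
  -- S is nonempty
  have hSne : S.Nonempty := by
    obtain ⟨m, hm, hup⟩ := hstep 0 (by omega)
    refine ⟨m, 0, by omega, ?_⟩
    rw [hup]
    simp only [Function.update_self]
    exact fun he => hm he.symm
  -- minimal element of S in the interaction order
  haveI : IsTrans (Fin n) (Relation.TransGen (Arc f)) :=
    ⟨fun _ _ _ => Relation.TransGen.trans⟩
  haveI : IsIrrefl (Fin n) (Relation.TransGen (Arc f)) := ⟨hG⟩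
  have hwf : WellFounded (Relation.TransGen (Arc f)) :=
    Finite.wellFounded_of_trans_of_irrefl _
  obtain ⟨i, hiS, hmin⟩ := hwf.has_min S hSne
  -- a coordinate differing from the start must have flipped
  have hdiff : ∀ k, k ≤ l → ∀ j, p k j ≠ p 0 j → j ∈ S := by
    intro k
    induction k with
    | zero => intro _ j hne; exact absurd rfl hne
    | succ k ih =>
      intro hk j hne
      by_cases h : p (k + 1) j = p k j
      · rw [h] at hne
        exact ih (by omega) j hne
      · exact ⟨k, by omega, fun he => h he.symm⟩
  -- f (p k) i is constant along the cycle
  have hfc : ∀ k, k ≤ l → f (p k) i = f (p 0) i := by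
    intro k hk
    apply agree_of_noArc f i (Finset.univ.filter fun j => p k j ≠ p 0 j)
    · intro j hj
      exact Finset.mem_filter.mpr ⟨Finset.mem_univ j, hj⟩
    · intro j hj harc
      exact hmin j (hdiff k hk j (Finset.mem_filter.mp hj).2) (Relation.TransGen.single harc)
  set c := f (p 0) i with hc
  -- once coordinate i equals c, it stays c
  have hstep_i : ∀ k, k < l → p k i = c → p (k + 1) i = c := by
    intro k hk hpk
    rcases hcoord k hk i with h | ⟨h, _⟩
    · rw [h, hpk]
    · rw [h, hfc k (by omega)]
  have hmono : ∀ d a, a + d ≤ l → p a i = c → p (a + d) i = c := by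
    intro d
    induction d with
    | zero => intro a _ h; exact h
    | succ d ih =>
      intro a h ha
      have := ih a (by omega) ha
      have h2 := hstep_i (a + d) (by omega) this
      simpa [show a + (d + 1) = a + d + 1 by omega] using h2
  -- i flips somewhere
  obtain ⟨k0, hk0, hflip⟩ := hiS
  rcases hcoord k0 hk0 i with h | ⟨h1, h2⟩
  · exact hflip h.symm
  rw [hfc k0 (by omega)] at h1 h2
  -- p (k0+1) i = c, p k0 i ≠ c
  have hp0i : p 0 i ≠ c := by
    intro h0
    have := hmono k0 0 (by omega) (by simpa using h0)
    simp only [Nat.zero_add] at this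
    exact h2 this.symm
  have hpl_c : p l i = c := by
    have := hmono (l - (k0 + 1)) (k0 + 1) (by omega) h1
    rwa [show k0 + 1 + (l - (k0 + 1)) = l by omega] at this
  rw [hpl, ← hp0] at hpl_c
  exact hp0i hpl_c
end

section
/- If f : {0,1}^n → {0,1}^n is monotone (x ≤ y implies f(x) ≤ f(y) componentwise), then for every configuration x there exists a fixed point y of f and a path in the asynchronous graph Γ(f) from x to y of length exactly d_H(x,y). -/
namespace Stmt3Aux

variable {n : ℕ}

/-! ### Order helpers -/

lemma le_imp {x y : Fin n → Bool} (h : x ≤ y) (i : Fin n) (hx : x i = true) :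
    y i = true :=
  Bool.le_iff_imp.mp (h i) hx

lemma le_of_forall {x y : Fin n → Bool} (h : ∀ i, x i = true → y i = true) : x ≤ y :=
  fun i => Bool.le_iff_imp.mpr (h i)

/-! ### wt lemmas -/

lemma wt_le_n (z : Fin n → Bool) : wt z ≤ n := by
  unfold wt
  calc (Finset.univ.filter fun i => z i = true).card ≤ Finset.univ.card :=
        Finset.card_filter_le _ _
    _ = n := by simp

lemma wt_lt {z s : Fin n → Bool} (h : z ≤ s) (hne : z ≠ s) : wt z < wt s := by
  unfold wt
  apply Finset.card_lt_card
  constructor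
  · intro i hi
    simp only [Finset.mem_filter, Finset.mem_univ, true_and] at hi ⊢
    exact le_imp h i hi
  · intro hsub
    apply hne
    funext i
    cases hz : z i
    · cases hs : s i
      · rfl
      · have : i ∈ Finset.univ.filter fun j => z j = true := by
          apply hsub; simp [hs]
        simp only [Finset.mem_filter] at this
        rw [hz] at this; exact absurd this.2 (by decide)
    · rw [le_imp h i hz]

lemma eq_of_le_wt {z s : Fin n → Bool} (h : z ≤ s) (hw : wt s ≤ wt z) : z = s := by
  by_contra hne
  exact absurd hw (Nat.not_le_of_lt (wt_lt h hne))

lemma all_false_of_wt_zero {z : Fin n → Bool} (h : wt z = 0) (i : Fin n) : z i = false := by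
  unfold wt at h
  rw [Finset.card_eq_zero] at h
  cases hz : z i
  · rfl
  · exfalso
    have : i ∈ Finset.univ.filter fun j => z j = true := by simp [hz]
    rw [h] at this
    exact absurd this (Finset.notMem_empty i)

lemma wt_update_false {z : Fin n → Bool} {i : Fin n} (h : z i = true) :
    wt (Function.update z i false) + 1 = wt z := by
  unfold wt
  have hset : (Finset.univ.filter fun j => Function.update z i false j = true)
      = (Finset.univ.filter fun j => z j = true).erase i := by
    ext j
    simp only [Finset.mem_filter, Finset.mem_univ, true_and, Finset.mem_erase]
    by_cases hj : j = i
    · subst hj; simp [Function.update_self]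
    · rw [Function.update_of_ne hj]
      exact ⟨fun hz => ⟨hj, hz⟩, fun hz => hz.2⟩
  rw [hset, Finset.card_erase_of_mem (by simp [h])]
  have hpos : 0 < (Finset.univ.filter fun j => z j = true).card :=
    Finset.card_pos.mpr ⟨i, by simp [h]⟩
  omega

lemma wt_update_true {z : Fin n → Bool} {i : Fin n} (h : z i = false) :
    wt (Function.update z i true) = wt z + 1 := by
  unfold wt
  have hset : (Finset.univ.filter fun j => Function.update z i true j = true)
      = insert i (Finset.univ.filter fun j => z j = true) := by
    ext j
    simp only [Finset.mem_filter, Finset.mem_univ, true_and, Finset.mem_insert]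
    by_cases hj : j = i
    · subst hj; simp [Function.update_self]
    · rw [Function.update_of_ne hj]
      exact ⟨fun hz => Or.inr hz, fun hz => hz.elim (fun he => absurd he hj) id⟩
  rw [hset, Finset.card_insert_of_notMem (by simp [h])]

/-! ### ham lemmas -/

lemma ham_self (z : Fin n → Bool) : ham z z = 0 := by
  unfold ham; simp

lemma ham_update {z y : Fin n → Bool} {i : Fin n} (h : z i ≠ y i) :
    ham (Function.update z i (y i)) y + 1 = ham z y := by
  unfold ham
  have hset : (Finset.univ.filter fun j => Function.update z i (y i) j ≠ y j)
      = (Finset.univ.filter fun j => z j ≠ y j).erase i := by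
    ext j
    simp only [Finset.mem_filter, Finset.mem_univ, true_and, Finset.mem_erase]
    by_cases hj : j = i
    · subst hj; simp [Function.update_self]
    · rw [Function.update_of_ne hj]
      exact ⟨fun hz => ⟨hj, hz⟩, fun hz => hz.2⟩
  rw [hset, Finset.card_erase_of_mem (by simp [h])]
  have hpos : 0 < (Finset.univ.filter fun j => z j ≠ y j).card :=
    Finset.card_pos.mpr ⟨i, by simp [h]⟩
  omega

end Stmt3Aux


namespace Stmt3Aux

variable {n : ℕ}

/-! ### Path lemmas -/

lemma pathlen_refl (f : (Fin n → Bool) → Fin n → Bool) (z : Fin n → Bool) :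
    PathLen f z z 0 :=
  ⟨fun _ => z, rfl, rfl, fun k hk => absurd hk (Nat.not_lt_zero k)⟩

lemma pathlen_cons {f : (Fin n → Bool) → Fin n → Bool} {a b c : Fin n → Bool} {l : ℕ}
    (hs : Step f a b) (h : PathLen f b c l) : PathLen f a c (l + 1) := by
  obtain ⟨p, h0, hl, hst⟩ := h
  refine ⟨fun k => match k with | 0 => a | (k+1) => p k, rfl, hl, ?_⟩
  intro k hk
  match k with
  | 0 => simpa [h0] using hs
  | (k+1) => exact hst k (by omega)

lemma pathlen_trans {f : (Fin n → Bool) → Fin n → Bool} {a b c : Fin n → Bool} {l m : ℕ}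
    (h1 : PathLen f a b l) (h2 : PathLen f b c m) : PathLen f a c (l + m) := by
  obtain ⟨p, hp0, hpl, hps⟩ := h1
  obtain ⟨q, hq0, hqm, hqs⟩ := h2
  refine ⟨fun k => if k < l then p k else q (k - l), ?_, ?_, ?_⟩
  · show (if 0 < l then p 0 else q (0 - l)) = a
    by_cases h : 0 < l
    · rw [if_pos h, hp0]
    · have hl0 : l = 0 := by omega
      rw [if_neg h, hl0, Nat.sub_zero, hq0, ← hpl, hl0, hp0]
  · show (if l + m < l then p (l+m) else q (l + m - l)) = c
    have h : ¬ (l + m < l) := by omega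
    rw [if_neg h, Nat.add_sub_cancel_left, hqm]
  · intro k hk
    show Step f (if k < l then p k else q (k - l)) (if k + 1 < l then p (k+1) else q (k + 1 - l))
    by_cases h1k : k + 1 < l
    · have hkl : k < l := by omega
      rw [if_pos hkl, if_pos h1k]
      exact hps k (by omega)
    · by_cases hkl : k < l
      · have hkeq : k + 1 = l := by omega
        rw [if_pos hkl, if_neg h1k]
        have hq : q (k + 1 - l) = p (k + 1) := by
          rw [hkeq, Nat.sub_self, hq0, ← hpl]
        rw [hq]
        exact hps k (by omega)
      · have h1k' : ¬ (k + 1 < l) := by omega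
        rw [if_neg hkl, if_neg h1k']
        have harith : k + 1 - l = (k - l) + 1 := by omega
        rw [harith]
        exact hqs (k - l) (by omega)

/-! ### Closure operators -/

variable (f : (Fin n → Bool) → Fin n → Bool)

/-- one synchronous "decreasing" step -/
def dstep (w : Fin n → Bool) : Fin n → Bool := fun i => w i && f w i

/-- one synchronous "increasing" step -/
def ustep (w : Fin n → Bool) : Fin n → Bool := fun i => w i || f w i

/-- down closure -/
def dcl (z : Fin n → Bool) : Fin n → Bool := (dstep f)^[n] z

/-- up closure -/
def ucl (z : Fin n → Bool) : Fin n → Bool := (ustep f)^[n] z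

lemma dstep_le (w : Fin n → Bool) : dstep f w ≤ w := by
  apply le_of_forall
  intro i hi
  unfold dstep at hi
  exact (Bool.and_eq_true _ _ |>.mp hi).1

lemma le_ustep (w : Fin n → Bool) : w ≤ ustep f w := by
  apply le_of_forall
  intro i hi
  unfold ustep
  rw [hi]; rfl

variable {f}

lemma dstep_mono (hf : Monotone f) {w w' : Fin n → Bool} (h : w ≤ w') :
    dstep f w ≤ dstep f w' := by
  apply le_of_forall
  intro i hi
  unfold dstep at hi ⊢
  obtain ⟨h1, h2⟩ := Bool.and_eq_true _ _ |>.mp hi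
  rw [le_imp h i h1, le_imp (hf h) i h2]
  rfl

lemma ustep_mono (hf : Monotone f) {w w' : Fin n → Bool} (h : w ≤ w') :
    ustep f w ≤ ustep f w' := by
  apply le_of_forall
  intro i hi
  unfold ustep at hi ⊢
  rcases Bool.or_eq_true _ _ |>.mp hi with h1 | h2
  · rw [le_imp h i h1]; rfl
  · rw [le_imp (hf h) i h2]
    exact Bool.or_true _

lemma iter_dstep_le (k : ℕ) (z : Fin n → Bool) : (dstep f)^[k] z ≤ z := by
  induction k with
  | zero => exact le_rfl
  | succ k ih =>
      rw [Function.iterate_succ_apply']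
      exact le_trans (dstep_le f _) ih

lemma iter_ustep_ge (k : ℕ) (z : Fin n → Bool) : z ≤ (ustep f)^[k] z := by
  induction k with
  | zero => exact le_rfl
  | succ k ih =>
      rw [Function.iterate_succ_apply']
      exact le_trans ih (le_ustep f _)

lemma dcl_le (z : Fin n → Bool) : dcl f z ≤ z := iter_dstep_le (f := f) n z

lemma ucl_ge (z : Fin n → Bool) : z ≤ ucl f z := iter_ustep_ge (f := f) n z

lemma iter_dstep_mono (hf : Monotone f) (k : ℕ) {z w : Fin n → Bool} (h : z ≤ w) :
    (dstep f)^[k] z ≤ (dstep f)^[k] w := by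
  induction k with
  | zero => exact h
  | succ k ih =>
      rw [Function.iterate_succ_apply', Function.iterate_succ_apply']
      exact dstep_mono hf ih

lemma iter_ustep_mono (hf : Monotone f) (k : ℕ) {z w : Fin n → Bool} (h : z ≤ w) :
    (ustep f)^[k] z ≤ (ustep f)^[k] w := by
  induction k with
  | zero => exact h
  | succ k ih =>
      rw [Function.iterate_succ_apply', Function.iterate_succ_apply']
      exact ustep_mono hf ih

lemma dcl_mono (hf : Monotone f) {z w : Fin n → Bool} (h : z ≤ w) : dcl f z ≤ dcl f w :=
  iter_dstep_mono hf n h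

/-- stabilization of the decreasing iteration -/
lemma stab_dn : ∀ (k : ℕ) (w : Fin n → Bool), wt w ≤ k →
    (dstep f)^[k] w = (dstep f)^[k+1] w := by
  intro k
  induction k with
  | zero =>
      intro w hw
      have hall : ∀ i, w i = false := all_false_of_wt_zero (Nat.le_zero.mp hw)
      have hfix : dstep f w = w := by
        funext i
        unfold dstep
        rw [hall i]
        rfl
      simp [hfix]
  | succ k ih =>
      intro w hw
      by_cases hfix : dstep f w = w
      · rw [Function.iterate_fixed hfix, Function.iterate_fixed hfix]
      · have hlt : wt (dstep f w) < wt w := wt_lt (dstep_le f w) hfix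
        have := ih (dstep f w) (by omega)
        rw [Function.iterate_succ_apply (dstep f) (k+1) w,
            Function.iterate_succ_apply (dstep f) k w]
        exact this

/-- stabilization of the increasing iteration, via the count of false coordinates -/
lemma stab_up : ∀ (k : ℕ) (w : Fin n → Bool), n ≤ wt w + k →
    (ustep f)^[k] w = (ustep f)^[k+1] w := by
  intro k
  induction k with
  | zero =>
      intro w hw
      have hall : ∀ i, w i = true := by
        intro i
        by_contra hfalse
        have hfi : w i = false := by
          cases hwi : w i
          · rfl
          · exact absurd hwi hfalse
        -- wt w < n since i is not in the filter
        have hsub : (Finset.univ.filter fun j => w j = true) ⊂ Finset.univ := by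
          constructor
          · exact Finset.filter_subset _ _
          · intro hsup
            have : i ∈ Finset.univ.filter fun j => w j = true := hsup (Finset.mem_univ i)
            simp only [Finset.mem_filter] at this
            rw [hfi] at this
            exact absurd this.2 (by decide)
        have : wt w < n := by
          have := Finset.card_lt_card hsub
          simpa [wt] using this
        omega
      have hfix : ustep f w = w := by
        funext i
        unfold ustep
        rw [hall i]
        rfl
      simp [hfix]
  | succ k ih =>
      intro w hw
      by_cases hfix : ustep f w = w
      · rw [Function.iterate_fixed hfix, Function.iterate_fixed hfix]
      · have hlt : wt w < wt (ustep f w) := wt_lt (le_ustep f w) (fun he => hfix he.symm)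
        have := ih (ustep f w) (by omega)
        rw [Function.iterate_succ_apply (ustep f) (k+1) w,
            Function.iterate_succ_apply (ustep f) k w]
        exact this

lemma dcl_stable (z : Fin n → Bool) : dstep f (dcl f z) = dcl f z := by
  have h := stab_dn (f := f) n z (wt_le_n z)
  unfold dcl
  rw [Function.iterate_succ_apply'] at h
  exact h.symm

lemma ucl_stable (z : Fin n → Bool) : ustep f (ucl f z) = ucl f z := by
  have h := stab_up (f := f) n z (by omega)
  unfold ucl
  rw [Function.iterate_succ_apply'] at h
  exact h.symm

lemma dcl_dstep (z : Fin n → Bool) : dcl f (dstep f z) = dcl f z := by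
  unfold dcl
  rw [← Function.iterate_succ_apply (dstep f) n z]
  exact (stab_dn (f := f) n z (wt_le_n z)).symm

lemma dcl_le_f (z : Fin n → Bool) : dcl f z ≤ f (dcl f z) := by
  apply le_of_forall
  intro i hi
  have h := congrFun (dcl_stable (f := f) z) i
  unfold dstep at h
  rw [hi] at h
  cases hfd : f (dcl f z) i
  · rw [hfd] at h
    simpa using h
  · rfl

lemma f_ucl_le (z : Fin n → Bool) : f (ucl f z) ≤ ucl f z := by
  apply le_of_forall
  intro i hi
  have h := congrFun (ucl_stable (f := f) z) i
  unfold ustep at h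
  rw [hi] at h
  rw [← h]
  exact Bool.or_true _

lemma dcl_of_le_f {z : Fin n → Bool} (h : z ≤ f z) : dcl f z = z := by
  have hfix : dstep f z = z := by
    funext i
    unfold dstep
    cases hz : z i
    · rfl
    · rw [le_imp h i hz]
      rfl
  exact Function.iterate_fixed hfix n

lemma f_dcl_le (hf : Monotone f) {z : Fin n → Bool} (h : f z ≤ z) :
    f (dcl f z) ≤ dcl f z := by
  unfold dcl
  have key : ∀ k, f ((dstep f)^[k] z) ≤ (dstep f)^[k] z := by
    intro k
    induction k with
    | zero => exact h
    | succ k ih =>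
        rw [Function.iterate_succ_apply']
        apply le_of_forall
        intro i hi
        have h1 : f (dstep f ((dstep f)^[k] z)) ≤ f ((dstep f)^[k] z) :=
          hf (dstep_le f _)
        have h2 : f ((dstep f)^[k] z) i = true := le_imp h1 i hi
        have h3 : ((dstep f)^[k] z) i = true := le_imp ih i h2
        have hd : dstep f ((dstep f)^[k] z) i
            = (((dstep f)^[k] z) i && f ((dstep f)^[k] z) i) := rfl
        rw [hd, h3, h2]
        rfl
  exact key n

lemma dcl_fix (hf : Monotone f) {z : Fin n → Bool} (h : f z ≤ z) :
    f (dcl f z) = dcl f z :=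
  le_antisymm (f_dcl_le hf h) (dcl_le_f z)

lemma dcl_ge_fixed (hf : Monotone f) {t z : Fin n → Bool} (ht : f t = t) (h : t ≤ z) :
    t ≤ dcl f z := by
  have h1 : dcl f t = t := dcl_of_le_f (le_of_eq ht.symm)
  calc t = dcl f t := h1.symm
    _ ≤ dcl f z := dcl_mono hf h

end Stmt3Aux


namespace Stmt3Aux

variable {n : ℕ} {f : (Fin n → Bool) → Fin n → Bool}

/-- A decreasing geodesic from `z` to its down closure. -/
lemma desc_path (hf : Monotone f) : ∀ (k : ℕ) (z t : Fin n → Bool), wt z ≤ k →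
    dcl f z = t → PathLen f z t (ham z t) := by
  intro k
  induction k with
  | zero =>
      intro z t hw hd
      have hz : z = t := by
        by_contra hne
        have htz : t ≤ z := hd ▸ dcl_le (f := f) z
        have hlt := wt_lt htz (fun he => hne he.symm)
        omega
      rw [hz, ham_self]
      exact pathlen_refl f t
  | succ k ih =>
      intro z t hw hd
      by_cases hzt : z = t
      · rw [hzt, ham_self]; exact pathlen_refl f t
      · have hst : dstep f z ≠ z := by
          intro he
          apply hzt
          have h1 : dcl f z = z := Function.iterate_fixed he n
          rw [← hd, h1]
        obtain ⟨i, hi⟩ := Function.ne_iff.mp hst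
        have hz : z i = true := by
          cases hzi : z i
          · exfalso; apply hi
            show (z i && f z i) = z i
            rw [hzi]; rfl
          · rfl
        have hfz : f z i = false := by
          cases hfzi : f z i
          · rfl
          · exfalso; apply hi
            show (z i && f z i) = z i
            rw [hz, hfzi]; rfl
        have hdlds : dcl f z ≤ dstep f z := by
          rw [← dcl_dstep (f := f) z]
          exact dcl_le (f := f) _
        have hti : t i = false := by
          cases hti' : t i
          · rfl
          · exfalso
            have h1 : t ≤ dstep f z := hd ▸ hdlds
            have h2 := le_imp h1 i hti'
            show False
            have : dstep f z i = false := by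
              show (z i && f z i) = false
              rw [hz, hfz]; rfl
            rw [this] at h2
            exact absurd h2 (by decide)
        set z' := Function.update z i false with hz'def
        have hstep : Step f z z' := by
          refine ⟨i, ?_, ?_⟩
          · rw [hfz, hz]; decide
          · rw [hz'def, hfz]
        have hz'z : z' ≤ z := by
          apply le_of_forall
          intro j hj
          by_cases hji : j = i
          · subst hji
            rw [hz'def, Function.update_self] at hj
            exact absurd hj (by decide)
          · rwa [hz'def, Function.update_of_ne hji] at hj
        have hdsz' : dstep f z ≤ z' := by
          apply le_of_forall
          intro j hj
          by_cases hji : j = i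
          · subst hji
            have : dstep f z j = false := by
              show (z j && f z j) = false
              rw [hz, hfz]; rfl
            rw [this] at hj
            exact absurd hj (by decide)
          · rw [hz'def, Function.update_of_ne hji]
            exact le_imp (dstep_le f z) j hj
        have hdz' : dcl f z' = t := by
          apply le_antisymm
          · rw [← hd]; exact dcl_mono hf hz'z
          · have h1 : dcl f (dstep f z) ≤ dcl f z' := dcl_mono hf hdsz'
            rw [dcl_dstep (f := f) z, hd] at h1
            exact h1
        have hwt : wt z' + 1 = wt z := wt_update_false hz
        have hham : ham z' t + 1 = ham z t := by
          have hne : z i ≠ t i := by rw [hz, hti]; decide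
          have := ham_update hne
          rwa [hti, ← hz'def] at this
        have hp := ih z' t (by omega) hdz'
        have := pathlen_cons hstep hp
        rwa [hham] at this

/-- The ascending phase: either we can reach `x ⊔ t` by raising coordinates of `t`,
or we reach a point where all missing coordinates of `t` are blocked. -/
lemma asc_path (hf : Monotone f) (x t : Fin n → Bool) :
    ∀ (k : ℕ) (z : Fin n → Bool), x ≤ z → z ≤ (fun i => x i || t i) →
    wt (fun i => x i || t i) ≤ wt z + k →
    PathLen f z (fun i => x i || t i) (ham z (fun i => x i || t i)) ∨
    ∃ w : Fin n → Bool, x ≤ w ∧ (∃ i, w i = false ∧ t i = true) ∧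
      (∀ i, w i = false → t i = true → f w i = false) := by
  set s : Fin n → Bool := fun i => x i || t i with hsdef
  intro k
  induction k with
  | zero =>
      intro z hxz hzs hm
      have hz : z = s := eq_of_le_wt hzs hm
      rw [hz, ham_self]
      exact Or.inl (pathlen_refl f s)
  | succ k ih =>
      intro z hxz hzs hm
      by_cases hex : ∃ i, z i = false ∧ t i = true ∧ f z i = true
      · obtain ⟨i, hzi, hti, hfi⟩ := hex
        set z' := Function.update z i true with hz'def
        have hstep : Step f z z' := by
          refine ⟨i, ?_, ?_⟩
          · rw [hfi, hzi]; decide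
          · rw [hz'def, hfi]
        have hzz' : z ≤ z' := by
          apply le_of_forall
          intro j hj
          by_cases hji : j = i
          · subst hji; rw [hz'def, Function.update_self]
          · rwa [hz'def, Function.update_of_ne hji]
        have hxz' : x ≤ z' := le_trans hxz hzz'
        have hz's : z' ≤ s := by
          apply le_of_forall
          intro j hj
          by_cases hji : j = i
          · subst hji
            show (x j || t j) = true
            rw [hti]
            exact Bool.or_true _
          · rw [hz'def, Function.update_of_ne hji] at hj
            exact le_imp hzs j hj
        have hm' : wt s ≤ wt z' + k := by
          rw [hz'def, wt_update_true hzi]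
          omega
        rcases ih z' hxz' hz's hm' with hL | hR
        · left
          have hsi : s i = true := by
            show (x i || t i) = true
            rw [hti]; exact Bool.or_true _
          have hne : z i ≠ s i := by rw [hzi, hsi]; decide
          have hham := ham_update hne
          rw [hsi, ← hz'def] at hham
          have := pathlen_cons hstep hL
          rwa [hham] at this
        · exact Or.inr hR
      · by_cases hwit : ∃ i, z i = false ∧ t i = true
        · right
          refine ⟨z, hxz, hwit, ?_⟩
          intro i h1 h2
          cases hfzi : f z i
          · rfl
          · exact absurd ⟨i, h1, h2, hfzi⟩ hex
        · left
          have hzs' : z = s := by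
            funext j
            cases hzj : z j
            · cases hxj : x j
              · cases htj : t j
                · show false = (x j || t j)
                  rw [hxj, htj]; rfl
                · exact absurd ⟨j, hzj, htj⟩ hwit
              · have := le_imp hxz j hxj
                rw [hzj] at this
                exact absurd this (by decide)
            · have := le_imp hzs j hzj
              rw [← this]
          rw [hzs', ham_self]
          exact pathlen_refl f s

/-- Additivity of the Hamming distance through `x ⊔ t`. -/
lemma ham_split (x t : Fin n → Bool) :
    ham x t = ham x (fun i => x i || t i) + ham (fun i => x i || t i) t := by
  set s : Fin n → Bool := fun i => x i || t i with hsdef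
  have h1 : (Finset.univ.filter fun j => x j ≠ t j)
      = (Finset.univ.filter fun j => x j ≠ s j) ∪ (Finset.univ.filter fun j => s j ≠ t j) := by
    ext j
    simp only [Finset.mem_union, Finset.mem_filter, Finset.mem_univ, true_and, hsdef]
    cases hx : x j <;> cases ht : t j <;> simp
  have h2 : Disjoint (Finset.univ.filter fun j => x j ≠ s j)
      (Finset.univ.filter fun j => s j ≠ t j) := by
    rw [Finset.disjoint_left]
    intro j hj1 hj2
    simp only [Finset.mem_filter, Finset.mem_univ, true_and, hsdef] at hj1 hj2
    cases hx : x j <;> cases ht : t j <;> rw [hx] at hj1 <;> rw [ht] at hj2 <;>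
      simp [hx, ht] at hj1 hj2
  show (Finset.univ.filter fun j => x j ≠ t j).card = _ + _
  rw [h1, Finset.card_union_of_disjoint h2]
  rfl

/-- The main recursion on the weight of the target fixed point. -/
lemma main_rec (hf : Monotone f) (x : Fin n → Bool) : ∀ (k : ℕ) (t : Fin n → Bool),
    f t = t → dcl f (fun i => x i || t i) = t → wt t ≤ k →
    ∃ y, f y = y ∧ PathLen f x y (ham x y) := by
  intro k
  induction k with
  | zero =>
      intro t ht hI2 hwt
      rcases asc_path hf x t (wt (fun i => x i || t i)) x le_rfl
          (le_of_forall fun j hj => by show (x j || t j) = true; rw [hj]; rfl)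
          (by omega) with hL | hR
      · have hdesc := desc_path hf (wt (fun i => x i || t i)) (fun i => x i || t i) t
          le_rfl hI2
        refine ⟨t, ht, ?_⟩
        rw [ham_split x t]
        exact pathlen_trans hL hdesc
      · obtain ⟨w, _, ⟨i₀, _, hti₀⟩, _⟩ := hR
        have := all_false_of_wt_zero (Nat.le_zero.mp hwt) i₀
        rw [this] at hti₀
        exact absurd hti₀ (by decide)
  | succ k ih =>
      intro t ht hI2 hwt
      rcases asc_path hf x t (wt (fun i => x i || t i)) x le_rfl
          (le_of_forall fun j hj => by show (x j || t j) = true; rw [hj]; rfl)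
          (by omega) with hL | hR
      · have hdesc := desc_path hf (wt (fun i => x i || t i)) (fun i => x i || t i) t
          le_rfl hI2
        refine ⟨t, ht, ?_⟩
        rw [ham_split x t]
        exact pathlen_trans hL hdesc
      · obtain ⟨w, hxw, ⟨i₀, hwi₀, hti₀⟩, hstuck⟩ := hR
        set v : Fin n → Bool := fun j => w j && t j with hvdef
        have hvt : v ≤ t := le_of_forall fun j hj => ((Bool.and_eq_true _ _).mp hj).2
        have hvw : v ≤ w := le_of_forall fun j hj => ((Bool.and_eq_true _ _).mp hj).1
        have hfv : f v ≤ v := by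
          apply le_of_forall
          intro j hj
          cases htj : t j
          · exfalso
            have h1 : f v ≤ t := ht ▸ hf hvt
            have h2 := le_imp h1 j hj
            rw [htj] at h2
            exact absurd h2 (by decide)
          · cases hwj : w j
            · exfalso
              have h1 : f v ≤ f w := hf hvw
              have h2 := le_imp h1 j hj
              have h3 := hstuck j hwj htj
              rw [h3] at h2
              exact absurd h2 (by decide)
            · show (w j && t j) = true
              rw [hwj, htj]; rfl
        set t' := dcl f v with ht'def
        have ht' : f t' = t' := dcl_fix hf hfv
        have ht'v : t' ≤ v := dcl_le (f := f) v
        have ht't : t' ≤ t := le_trans ht'v hvt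
        have hne : t' ≠ t := by
          intro he
          have h1 : t' i₀ = true := by rw [he]; exact hti₀
          have h2 := le_imp ht'v i₀ h1
          have h3 : v i₀ = false := by
            show (w i₀ && t i₀) = false
            rw [hwi₀]; rfl
          rw [h3] at h2
          exact absurd h2 (by decide)
        have hI2' : dcl f (fun i => x i || t' i) = t' := by
          set d := dcl f (fun i => x i || t' i) with hddef
          have hds' : d ≤ (fun i => x i || t' i) := dcl_le (f := f) _
          have hdt : d ≤ t := by
            have hss : (fun i => x i || t' i) ≤ (fun i => x i || t i) := by
              apply le_of_forall
              intro j hj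
              rcases (Bool.or_eq_true _ _).mp hj with hx | ht'j
              · show (x j || t j) = true
                rw [hx]; rfl
              · show (x j || t j) = true
                rw [le_imp ht't j ht'j]
                exact Bool.or_true _
            calc d ≤ dcl f (fun i => x i || t i) := dcl_mono hf hss
              _ = t := hI2
          have hdv : d ≤ v := by
            apply le_of_forall
            intro j hj
            have htj : t j = true := le_imp hdt j hj
            have hwj : w j = true := by
              have h1 := le_imp hds' j hj
              rcases (Bool.or_eq_true _ _).mp h1 with hx | ht'j
              · exact le_imp hxw j hx
              · exact le_imp (le_trans ht'v hvw) j ht'j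
            show (w j && t j) = true
            rw [hwj, htj]; rfl
          have hdd : dcl f d = d := dcl_of_le_f (dcl_le_f (f := f) _)
          have hd_le_t' : d ≤ t' := by
            have h1 : dcl f d ≤ dcl f v := dcl_mono hf hdv
            rwa [hdd] at h1
          have ht'_le_d : t' ≤ d :=
            dcl_ge_fixed hf ht' (le_of_forall fun j hj => by
              show (x j || t' j) = true
              rw [hj]; exact Bool.or_true _)
          exact le_antisymm hd_le_t' ht'_le_d
        have hwtlt : wt t' < wt t := wt_lt ht't hne
        exact ih t' ht' hI2' (by omega)

end Stmt3Aux

theorem stmt_3 {n : ℕ} (f : (Fin n → Bool) → Fin n → Bool)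
    (hf : Monotone f) :
    ∀ x, ∃ y, f y = y ∧ PathLen f x y (ham x y) := by
  intro x
  set t0 := Stmt3Aux.dcl f (Stmt3Aux.ucl f x) with ht0def
  have hft0 : f t0 = t0 := Stmt3Aux.dcl_fix hf (Stmt3Aux.f_ucl_le x)
  have hI2 : Stmt3Aux.dcl f (fun i => x i || t0 i) = t0 := by
    apply le_antisymm
    · have hle : (fun i => x i || t0 i) ≤ Stmt3Aux.ucl f x := by
        apply Stmt3Aux.le_of_forall
        intro j hj
        rcases (Bool.or_eq_true _ _).mp hj with hx | ht
        · exact Stmt3Aux.le_imp (Stmt3Aux.ucl_ge (f := f) x) j hx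
        · exact Stmt3Aux.le_imp (Stmt3Aux.dcl_le (f := f) (Stmt3Aux.ucl f x)) j ht
      calc Stmt3Aux.dcl f (fun i => x i || t0 i)
          ≤ Stmt3Aux.dcl f (Stmt3Aux.ucl f x) := Stmt3Aux.dcl_mono hf hle
        _ = t0 := ht0def.symm
    · exact Stmt3Aux.dcl_ge_fixed hf hft0 (Stmt3Aux.le_of_forall fun j hj => by
        show (x j || t0 j) = true
        rw [hj]; exact Bool.or_true _)
  exact Stmt3Aux.main_rec hf x (wt t0) t0 hft0 hI2 le_rfl
end

section
/- For every even n ≥ 2, there exists a monotone Boolean network f : {0,1}^n → {0,1}^n, a configuration x, and a fixed point y of f, such that y is reachable from x in the asynchronous graph Γ(f) and the distance d_{Γ(f)}(x,y) is at least 2^{n/2}. -/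
/-!
Write `n = 2m`. The reflected Gray code `g 0, …, g (2^m - 1)` runs through distinct vertices of
the `m`-cube, changing one bit at a time. In dual-rail form, where bit `t` is stored in the two
coordinates "`g t = false`" and "`g t = true`", these vertices form an antichain in `{0,1}^{2m}`.
The monotone network sends `z` to the join of the successors of the codewords below `z`. It goes
from codeword `k` to codeword `k + 1` in two steps (raise the new rail, then lower the old one),
which reaches the last codeword, a fixed point. Conversely, `2 * (least k with codeword k ≤ z)
+ weight z` grows by at most one per step, so every path from the first to the last codeword
has length at least `2 (2^m - 1) ≥ 2^m`.
-/

section Paths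

variable {I J : Type*} {f : (I → Bool) → I → Bool}

def relabel (e : I ≃ J) (f : (I → Bool) → I → Bool) : (J → Bool) → J → Bool :=
  fun z => f (z ∘ e) ∘ e.symm

lemma relabel_apply_comp_symm (e : I ≃ J) (f : (I → Bool) → I → Bool) (x : I → Bool) :
    relabel e f (x ∘ e.symm) = f x ∘ e.symm := by
  simp [relabel, Function.comp_assoc]

lemma relabel_symm_relabel (e : I ≃ J) (f : (I → Bool) → I → Bool) :
    relabel e.symm (relabel e f) = f := by
  funext z i
  simp [relabel, Function.comp_def]

lemma Monotone.relabel (e : I ≃ J) (hf : Monotone f) : Monotone (relabel e f) :=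
  fun _ _ hz j => hf (fun i => hz (e i)) (e.symm j)

variable [DecidableEq I] [DecidableEq J]

lemma PathLen.refl (f : (I → Bool) → I → Bool) (x : I → Bool) : PathLen f x x 0 :=
  ⟨fun _ => x, rfl, rfl, fun _ hk => absurd hk (Nat.not_lt_zero _)⟩

lemma PathLen.snoc {x y z : I → Bool} {l : ℕ} (hp : PathLen f x y l) (hs : Step f y z) :
    PathLen f x z (l + 1) := by
  obtain ⟨p, h0, hl, hsteps⟩ := hp
  refine ⟨fun j => if j ≤ l then p j else z, by simpa using h0, by simp, fun k hk => ?_⟩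
  rcases Nat.lt_or_eq_of_le (Nat.lt_succ_iff.mp hk) with hk | rfl
  · simpa [hk.le, Nat.succ_le_of_lt hk] using hsteps k hk
  · simpa [hl] using hs

lemma PathLen.exists_last {x z : I → Bool} {l : ℕ} (hp : PathLen f x z (l + 1)) :
    ∃ y, PathLen f x y l ∧ Step f y z := by
  obtain ⟨p, h0, hl, hsteps⟩ := hp
  exact ⟨p l, ⟨p, h0, rfl, fun k hk => hsteps k (by omega)⟩, hl ▸ hsteps l (by omega)⟩

lemma PathLen.potential_le (Φ : (I → Bool) → ℕ) {S : Set (I → Bool)}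
    (hS : ∀ z z', Step f z z' → z' ∈ S → z ∈ S)
    (hΦ : ∀ z z', Step f z z' → z' ∈ S → Φ z' ≤ Φ z + 1)
    {x y : I → Bool} {l : ℕ} (hy : y ∈ S) (hp : PathLen f x y l) : Φ y ≤ Φ x + l := by
  induction l generalizing y with
  | zero =>
    obtain ⟨p, h0, hl, -⟩ := hp
    rw [← hl, ← h0]
    omega
  | succ l ih =>
    obtain ⟨w, hw, hs⟩ := hp.exists_last
    have := ih (hS w y hs hy) hw
    have := hΦ w y hs hy
    omega

lemma Step.relabel (e : I ≃ J) {x y : I → Bool} (hs : Step f x y) :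
    Step (relabel e f) (x ∘ e.symm) (y ∘ e.symm) := by
  obtain ⟨i, hne, rfl⟩ := hs
  refine ⟨e i, by simpa [relabel_apply_comp_symm] using hne, ?_⟩
  rw [Function.update_comp_equiv, relabel_apply_comp_symm]
  simp

lemma PathLen.relabel (e : I ≃ J) {x y : I → Bool} {l : ℕ} (hp : PathLen f x y l) :
    PathLen (relabel e f) (x ∘ e.symm) (y ∘ e.symm) l := by
  obtain ⟨p, rfl, rfl, hsteps⟩ := hp
  exact ⟨fun k => p k ∘ e.symm, rfl, rfl, fun k hk => (hsteps k hk).relabel e⟩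

lemma pathLen_relabel_iff (e : I ≃ J) {x y : I → Bool} {l : ℕ} :
    PathLen (relabel e f) (x ∘ e.symm) (y ∘ e.symm) l ↔ PathLen f x y l := by
  refine ⟨fun hp => ?_, PathLen.relabel e⟩
  simpa [relabel_symm_relabel, Function.comp_def] using hp.relabel e.symm

end Paths

section DualRail

variable {ι : Type*}

def dualRail (x : ι → Bool) : ι × Bool → Bool := fun p => decide (x p.1 = p.2)

@[simp] lemma dualRail_apply (x : ι → Bool) (p : ι × Bool) :
    dualRail x p = decide (x p.1 = p.2) := rfl

lemma dualRail_le_dualRail_iff {x y : ι → Bool} : dualRail x ≤ dualRail y ↔ x = y := by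
  refine ⟨fun h => funext fun t => ?_, fun h => h ▸ le_rfl⟩
  simpa [eq_comm] using Bool.le_iff_imp.mp (h (t, x t))

lemma apply_not_eq_true_of_dualRail_le {x : ι → Bool} {z : ι × Bool → Bool}
    (h : dualRail x ≤ z) {t : ι} {b : Bool} (hb : z (t, b) = false) : z (t, !b) = true := by
  have hx : x t ≠ b := fun hxb =>
    absurd (Bool.le_iff_imp.mp (h (t, b)) (by simp [hxb])) (by simp [hb])
  exact Bool.le_iff_imp.mp (h (t, !b)) (by simpa [Bool.eq_not] using hx)

def weight {I : Type*} [Fintype I] (z : I → Bool) : ℕ := ∑ i, (z i).toNat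

lemma weight_update {I : Type*} [Fintype I] [DecidableEq I] (z : I → Bool) (i : I) (b : Bool) :
    weight (Function.update z i b) + (z i).toNat = weight z + b.toNat := by
  have hrest : ∀ j ∈ Finset.univ.erase i, (Function.update z i b j).toNat = (z j).toNat :=
    fun j hj => by rw [Function.update_of_ne (Finset.ne_of_mem_erase hj)]
  rw [weight, weight, ← Finset.add_sum_erase _ _ (Finset.mem_univ i),
    ← Finset.add_sum_erase _ _ (Finset.mem_univ i), Finset.sum_congr rfl hrest,
    Function.update_self]
  ring

lemma weight_dualRail [Fintype ι] (x : ι → Bool) : weight (dualRail x) = Fintype.card ι := by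
  simp only [weight, Fintype.sum_prod_type, dualRail_apply, Fintype.sum_bool]
  rw [Fintype.card_eq_sum_ones]
  exact Finset.sum_congr rfl fun t _ => by cases x t <;> rfl

variable [DecidableEq ι]

lemma dualRail_update_not (x : ι → Bool) (t : ι) :
    dualRail (Function.update x t (!x t)) =
      Function.update (Function.update (dualRail x) (t, !x t) true) (t, x t) false := by
  funext ⟨s, b⟩
  by_cases hs : s = t
  · subst hs
    cases b <;> cases x s <;> simp
  · simp [hs]

lemma eq_or_eq_update_of_dualRail_le {x y : ι → Bool} {t : ι}
    (h : dualRail y ≤ Function.update (dualRail x) (t, !x t) true) :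
    y = x ∨ y = Function.update x t (!x t) := by
  have hagree : ∀ s ≠ t, y s = x s := fun s hs => by
    have := Bool.le_iff_imp.mp (h (s, y s)) (by simp)
    simpa [Function.update_of_ne (show (s, y s) ≠ (t, !x t) by simp [hs]), eq_comm] using this
  by_cases hyt : y t = x t
  · exact Or.inl (funext fun s => if hs : s = t then hs ▸ hyt else hagree s hs)
  · refine Or.inr (funext fun s => ?_)
    by_cases hs : s = t
    · subst hs; simpa [Bool.eq_not] using hyt
    · rw [Function.update_of_ne hs, hagree s hs]

end DualRail

section WalkNetwork

variable {I : Type*} {a : ℕ → I → Bool} {N : ℕ}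

open Classical in
/-- Taking `min` makes the last point `a N` its own successor. -/
noncomputable def walkNet (a : ℕ → I → Bool) (N : ℕ) (z : I → Bool) (i : I) : Bool :=
  decide (∃ k ≤ N, a k ≤ z ∧ a (min (k + 1) N) i = true)

lemma walkNet_eq_true {z : I → Bool} {i : I} :
    walkNet a N z i = true ↔ ∃ k ≤ N, a k ≤ z ∧ a (min (k + 1) N) i = true := by
  simp [walkNet]

lemma monotone_walkNet : Monotone (walkNet a N) := fun _ _ hz i =>
  Bool.le_iff_imp.mpr fun h => by
    obtain ⟨k, hk, hle, hi⟩ := walkNet_eq_true.mp h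
    exact walkNet_eq_true.mpr ⟨k, hk, hle.trans hz, hi⟩

lemma mem_upperClosure_image_iff {z : I → Bool} :
    z ∈ upperClosure (a '' Set.Iic N) ↔ ∃ k ≤ N, a k ≤ z := by
  simp [mem_upperClosure]

/-- Meaningful only on `upperClosure (a '' Set.Iic N)`; elsewhere it is `sInf ∅ = 0`. -/
noncomputable def walkLevel (a : ℕ → I → Bool) (N : ℕ) (z : I → Bool) : ℕ :=
  sInf {k | k ≤ N ∧ a k ≤ z}

lemma walkLevel_spec {z : I → Bool} (hz : z ∈ upperClosure (a '' Set.Iic N)) :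
    walkLevel a N z ≤ N ∧ a (walkLevel a N z) ≤ z :=
  Nat.sInf_mem (mem_upperClosure_image_iff.mp hz)

lemma walkLevel_le {z : I → Bool} {k : ℕ} (hk : k ≤ N) (h : a k ≤ z) :
    walkLevel a N z ≤ k :=
  Nat.sInf_le ⟨hk, h⟩

variable [DecidableEq I]

lemma walkLevel_update_true_le {z : I → Bool} (hz : z ∈ upperClosure (a '' Set.Iic N)) (i : I) :
    walkLevel a N (Function.update z i true) ≤ walkLevel a N z :=
  walkLevel_le (walkLevel_spec hz).1 ((walkLevel_spec hz).2.trans (by simp))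

lemma mem_upperClosure_of_step {z z' : I → Bool} (hs : Step (walkNet a N) z z')
    (hz' : z' ∈ upperClosure (a '' Set.Iic N)) : z ∈ upperClosure (a '' Set.Iic N) := by
  obtain ⟨i, -, rfl⟩ := hs
  cases hi : walkNet a N z i
  · exact (upperClosure _).upper (by simp [hi]) hz'
  · obtain ⟨k, hk, hle, -⟩ := walkNet_eq_true.mp hi
    exact mem_upperClosure_image_iff.mpr ⟨k, hk, hle⟩

end WalkNetwork

structure IsCubePath {ι : Type*} [DecidableEq ι] (g : ℕ → ι → Bool) (N : ℕ) : Prop where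
  injOn : Set.InjOn g (Set.Iic N)
  exists_update : ∀ k < N, ∃ t, g (k + 1) = Function.update (g k) t (!g k t)

namespace IsCubePath

variable {ι : Type*} [DecidableEq ι] {g : ℕ → ι → Bool} {N : ℕ}

/-- Flipping `t` back would give `g (k + 2) = g k`. -/
lemma apply_add_two (hg : IsCubePath g N) {k : ℕ} (hk : k + 2 ≤ N) {t : ι}
    (ht : g (k + 1) t ≠ g k t) : g (k + 2) t = g (k + 1) t := by
  obtain ⟨s, hs⟩ := hg.exists_update k (by omega)
  obtain ⟨s', hs'⟩ := hg.exists_update (k + 1) (by omega)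
  have hst : s = t := by
    by_contra h
    exact ht (by rw [hs, Function.update_of_ne (Ne.symm h)])
  subst hst
  by_cases hs's : s' = s
  · subst hs's
    have hback : g (k + 2) = g k := by
      rw [hs', hs, Function.update_idem, Function.update_self, Bool.not_not,
        Function.update_eq_self]
    exact absurd (hg.injOn (by simp; omega) (by simp; omega) hback) (by omega)
  · rw [hs', Function.update_of_ne (Ne.symm hs's)]

lemma dualRail_le_iff (hg : IsCubePath g N) {k k' : ℕ} (hk : k ≤ N) (hk' : k' ≤ N) :
    dualRail (g k) ≤ dualRail (g k') ↔ k = k' := by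
  rw [dualRail_le_dualRail_iff]
  exact ⟨fun h => hg.injOn hk hk' h, fun h => h ▸ rfl⟩

lemma walkNet_dualRail (hg : IsCubePath g N) {k : ℕ} (hk : k ≤ N) :
    walkNet (dualRail ∘ g) N (dualRail (g k)) = dualRail (g (min (k + 1) N)) := by
  funext i
  rw [Bool.eq_iff_iff, walkNet_eq_true]
  constructor
  · rintro ⟨k', hk', hle, hi⟩
    rwa [(hg.dualRail_le_iff hk' hk).mp hle] at hi
  · exact fun hi => ⟨k, hk, le_rfl, hi⟩

lemma walkLevel_dualRail (hg : IsCubePath g N) {k : ℕ} (hk : k ≤ N) :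
    walkLevel (dualRail ∘ g) N (dualRail (g k)) = k := by
  have hmem : dualRail (g k) ∈ upperClosure ((dualRail ∘ g) '' Set.Iic N) :=
    mem_upperClosure_image_iff.mpr ⟨k, hk, le_rfl⟩
  obtain ⟨hle, hspec⟩ := walkLevel_spec hmem
  exact (hg.dualRail_le_iff hle hk).mp hspec

/-- Raise the new rail, then lower the old one: the only codewords below the intermediate
configuration are `k` and `k + 1`, and the old rail is lowered in both of their successors. -/
lemma exists_steps_succ (hg : IsCubePath g N) {k : ℕ} (hk : k < N) :
    ∃ w, Step (walkNet (dualRail ∘ g) N) (dualRail (g k)) w ∧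
      Step (walkNet (dualRail ∘ g) N) w (dualRail (g (k + 1))) := by
  obtain ⟨t, ht⟩ := hg.exists_update k hk
  have hsucc : dualRail (g (k + 1)) = Function.update (Function.update (dualRail (g k))
      (t, !g k t) true) (t, g k t) false := by
    rw [ht, dualRail_update_not]
  have hnet : walkNet (dualRail ∘ g) N (dualRail (g k)) = dualRail (g (k + 1)) := by
    rw [hg.walkNet_dualRail hk.le, min_eq_left hk]
  set w := Function.update (dualRail (g k)) (t, !g k t) true
  have hlower : walkNet (dualRail ∘ g) N w (t, g k t) = false := by
    refine Bool.eq_false_iff.mpr fun hw => ?_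
    obtain ⟨k', hk', hle, hi⟩ := walkNet_eq_true.mp hw
    rcases eq_or_eq_update_of_dualRail_le hle with hk'k | hk'k
    · rw [show k' = k from hg.injOn hk' hk.le hk'k, min_eq_left hk.nat_succ_le] at hi
      simp [ht] at hi
    · rw [show k' = k + 1 from hg.injOn hk' hk (hk'k.trans ht.symm)] at hi
      have hflipped : g (min (k + 1 + 1) N) t = g (k + 1) t := by
        rcases Nat.lt_or_ge (k + 1) N with hk1 | hk1
        · rw [min_eq_left hk1, hg.apply_add_two hk1 (by simp [ht])]
        · rw [min_eq_right (by omega), show N = k + 1 by omega]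
      simp [hflipped, ht] at hi
  refine ⟨w, ⟨(t, !g k t), by simp [hnet, ht], by simp [hnet, ht, w]⟩,
    ⟨(t, g k t), by simp [hlower, w], by rw [hlower, hsucc]⟩⟩

lemma pathLen_dualRail (hg : IsCubePath g N) {k : ℕ} (hk : k ≤ N) :
    PathLen (walkNet (dualRail ∘ g) N) (dualRail (g 0)) (dualRail (g k)) (2 * k) := by
  induction k with
  | zero => exact PathLen.refl _ _
  | succ k ih =>
    obtain ⟨w, hs₁, hs₂⟩ := hg.exists_steps_succ hk
    exact ((ih (by omega)).snoc hs₁).snoc hs₂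

/-- If `i` is the rail that the walk lowers next, the rail it raises next is already set:
some codeword lies below `update z i false`, and every codeword sets one rail of each pair. -/
lemma exists_dualRail_le_update_false (hg : IsCubePath g N) {z : ι × Bool → Bool} {ℓ : ℕ}
    (hℓN : ℓ ≤ N) (hℓz : dualRail (g ℓ) ≤ z) {i : ι × Bool}
    (hnext : dualRail (g (min (ℓ + 1) N)) i = false)
    (hz' : Function.update z i false ∈ upperClosure ((dualRail ∘ g) '' Set.Iic N)) :
    ∃ k ≤ min (ℓ + 1) N, dualRail (g k) ≤ Function.update z i false := by
  by_cases hℓi : dualRail (g ℓ) i = true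
  · have hℓN' : ℓ < N := by
      by_contra h
      rw [min_eq_right (by omega), show N = ℓ by omega, hℓi] at hnext
      exact Bool.false_ne_true hnext.symm
    obtain ⟨t, ht⟩ := hg.exists_update ℓ hℓN'
    rw [min_eq_left hℓN'.nat_succ_le] at hnext ⊢
    obtain ⟨s, b⟩ := i
    obtain rfl : s = t := by
      by_contra hst
      simp [ht, Function.update_of_ne hst] at hnext
      simp [hnext] at hℓi
    obtain rfl : b = g ℓ s := by simpa [eq_comm] using hℓi
    obtain ⟨k', -, hk'z⟩ := mem_upperClosure_image_iff.mp hz'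
    have hraised := apply_not_eq_true_of_dualRail_le hk'z (t := s) (b := g ℓ s) (by simp)
    rw [Function.update_of_ne (by simp)] at hraised
    refine ⟨ℓ + 1, le_rfl, ?_⟩
    rw [ht, dualRail_update_not]
    refine update_le_update_iff.mpr ⟨le_rfl, fun j _ => ?_⟩
    by_cases hj : j = (s, !g ℓ s)
    · simp [hj, hraised]
    · rw [Function.update_of_ne hj]
      exact hℓz j
  · refine ⟨ℓ, by omega, le_update_iff.mpr ⟨?_, fun j _ => hℓz j⟩⟩
    exact (Bool.eq_false_iff.mpr hℓi).le

lemma walkLevel_update_false_le (hg : IsCubePath g N) {z : ι × Bool → Bool}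
    (hz : z ∈ upperClosure ((dualRail ∘ g) '' Set.Iic N)) {i : ι × Bool}
    (hi : walkNet (dualRail ∘ g) N z i = false)
    (hz' : Function.update z i false ∈ upperClosure ((dualRail ∘ g) '' Set.Iic N)) :
    walkLevel (dualRail ∘ g) N (Function.update z i false) ≤
      walkLevel (dualRail ∘ g) N z + 1 := by
  obtain ⟨hℓN, hℓz⟩ := walkLevel_spec hz
  have hnext : dualRail (g (min (walkLevel (dualRail ∘ g) N z + 1) N)) i = false :=
    Bool.eq_false_iff.mpr fun h => by simp [walkNet_eq_true.mpr ⟨_, hℓN, hℓz, h⟩] at hi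
  obtain ⟨k, hk, hkz⟩ := hg.exists_dualRail_le_update_false hℓN hℓz hnext hz'
  exact (walkLevel_le (hk.trans (min_le_right _ _)) hkz).trans (hk.trans (min_le_left _ _))

variable [Fintype ι]

/-- A raising step adds one to the weight and does not raise the level; a lowering step
removes one from the weight and raises the level by at most one. -/
lemma potential_step_le (hg : IsCubePath g N) {z z' : ι × Bool → Bool}
    (hs : Step (walkNet (dualRail ∘ g) N) z z')
    (hz' : z' ∈ upperClosure ((dualRail ∘ g) '' Set.Iic N)) :
    2 * walkLevel (dualRail ∘ g) N z' + weight z' ≤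
      2 * walkLevel (dualRail ∘ g) N z + weight z + 1 := by
  have hz := mem_upperClosure_of_step hs hz'
  obtain ⟨i, hne, rfl⟩ := hs
  have hweight := weight_update z i (walkNet (dualRail ∘ g) N z i)
  cases hi : walkNet (dualRail ∘ g) N z i
  · rw [hi] at hne hweight hz'
    have hlevel := hg.walkLevel_update_false_le hz hi hz'
    have hzi : z i = true := by revert hne; cases z i <;> simp
    simp only [hzi, Bool.toNat_true, Bool.toNat_false] at hweight
    omega
  · rw [hi] at hne hweight
    have hlevel := walkLevel_update_true_le (a := dualRail ∘ g) hz i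
    have hzi : z i = false := by revert hne; cases z i <;> simp
    simp only [hzi, Bool.toNat_true, Bool.toNat_false] at hweight
    omega

lemma two_mul_le_of_pathLen (hg : IsCubePath g N) {l : ℕ}
    (hp : PathLen (walkNet (dualRail ∘ g) N) (dualRail (g 0)) (dualRail (g N)) l) :
    2 * N ≤ l := by
  have := hp.potential_le (fun z => 2 * walkLevel (dualRail ∘ g) N z + weight z)
    (fun _ _ hs hz' => mem_upperClosure_of_step hs hz') (fun _ _ => hg.potential_step_le)
    (mem_upperClosure_image_iff.mpr ⟨N, le_rfl, le_rfl⟩)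
  simp only [Function.comp_apply, hg.walkLevel_dualRail le_rfl,
    hg.walkLevel_dualRail (Nat.zero_le N), weight_dualRail] at this
  omega

end IsCubePath

def gray (k : ℕ) : ℕ := k ^^^ k / 2

lemma gray_div_two (k : ℕ) : gray k / 2 = gray (k / 2) := Nat.xor_div_two

lemma gray_mod_two (k : ℕ) : gray k % 2 = (k + k / 2) % 2 := Nat.xor_mod_two_eq

lemma gray_lt_two_pow {m k : ℕ} (hk : k < 2 ^ m) : gray k < 2 ^ m :=
  Nat.xor_lt_two_pow hk ((Nat.div_le_self k 2).trans_lt hk)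

lemma gray_injective : Function.Injective gray := by
  intro a b h
  induction a using Nat.strong_induction_on generalizing b with
  | _ a ih =>
    have hdiv : a / 2 = b / 2 := by
      rcases Nat.eq_zero_or_pos a with rfl | ha
      · have hb : b = b / 2 := xor_eq_zero_iff.mp (show gray b = 0 from h.symm)
        omega
      · exact ih _ (Nat.div_lt_self ha one_lt_two) (by rw [← gray_div_two, h, gray_div_two])
    calc a = gray a ^^^ a / 2 := (xor_cancel_right a _).symm
      _ = b := by rw [h, hdiv, gray, xor_cancel_right]

lemma exists_gray_succ (k : ℕ) : ∃ t, gray (k + 1) = gray k ^^^ 2 ^ t := by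
  induction k using Nat.strong_induction_on with
  | _ k ih =>
    have eq_of_div_mod {x y : ℕ} (hd : x / 2 = y / 2) (hm : x % 2 = y % 2) : x = y := by omega
    rcases Nat.even_or_odd' k with ⟨j, rfl | rfl⟩
    · refine ⟨0, eq_of_div_mod ?_ ?_⟩
      · rw [Nat.xor_div_two, gray_div_two, gray_div_two]
        simp only [show (2 * j + 1) / 2 = j by omega, show 2 * j / 2 = j by omega]
        simp
      · rw [gray_mod_two, Nat.xor_mod_two_eq]
        have := gray_mod_two (2 * j)
        omega
    · obtain ⟨t, ht⟩ := ih j (by omega)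
      refine ⟨t + 1, eq_of_div_mod ?_ ?_⟩
      · rw [Nat.xor_div_two, gray_div_two, gray_div_two, pow_succ,
          Nat.mul_div_cancel _ two_pos]
        simpa only [show (2 * j + 1 + 1) / 2 = j + 1 by omega, show (2 * j + 1) / 2 = j by omega]
          using ht
      · rw [gray_mod_two, Nat.xor_mod_two_eq, pow_succ]
        have := gray_mod_two (2 * j + 1)
        omega

def grayVec (m k : ℕ) : Fin m → Bool := fun i => (gray k).testBit i

lemma grayVec_injOn (m : ℕ) : Set.InjOn (grayVec m) (Set.Iio (2 ^ m)) := by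
  intro a ha b hb h
  refine gray_injective (Nat.eq_of_testBit_eq fun i => ?_)
  by_cases hi : i < m
  · exact congrFun h ⟨i, hi⟩
  · have hm : 2 ^ m ≤ 2 ^ i := Nat.pow_le_pow_right two_pos (by omega)
    rw [Nat.testBit_lt_two_pow ((gray_lt_two_pow ha).trans_le hm),
      Nat.testBit_lt_two_pow ((gray_lt_two_pow hb).trans_le hm)]

lemma isCubePath_grayVec (m : ℕ) : IsCubePath (grayVec m) (2 ^ m - 1) := by
  have hpos : 0 < 2 ^ m := Nat.two_pow_pos m
  refine ⟨(grayVec_injOn m).mono fun k (hk : k ≤ 2 ^ m - 1) => show k < 2 ^ m by omega,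
    fun k hk => ?_⟩
  obtain ⟨t, ht⟩ := exists_gray_succ k
  have htm : t < m := by
    by_contra htm
    have hm : 2 ^ m ≤ 2 ^ t := Nat.pow_le_pow_right two_pos (by omega)
    have hbit := congrArg (Nat.testBit · t) ht
    simp only [Nat.testBit_xor, Nat.testBit_two_pow_self,
      Nat.testBit_lt_two_pow ((gray_lt_two_pow (k := k + 1) (by omega)).trans_le hm),
      Nat.testBit_lt_two_pow ((gray_lt_two_pow (k := k) (by omega)).trans_le hm)] at hbit
    simp at hbit
  refine ⟨⟨t, htm⟩, funext fun i => ?_⟩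
  by_cases hi : i = ⟨t, htm⟩
  · subst hi
    simp [grayVec, ht, Nat.testBit_two_pow_self]
  · have hit : t ≠ i := fun h => hi (Fin.ext h.symm)
    simp [grayVec, ht, Function.update_of_ne hi, hit]

theorem stmt_5 (n : ℕ) (hn : Even n) (hn2 : 2 ≤ n) :
    ∃ f : (Fin n → Bool) → Fin n → Bool, Monotone f ∧
      ∃ x y, f y = y ∧ (∃ l, PathLen f x y l) ∧
        ∀ l, PathLen f x y l → 2 ^ (n / 2) ≤ l := by
  obtain ⟨m, rfl⟩ := hn
  have hg := isCubePath_grayVec m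
  let e : Fin m × Bool ≃ Fin (m + m) := Fintype.equivFinOfCardEq (by simp; omega)
  have hlen : 2 ^ ((m + m) / 2) ≤ 2 * (2 ^ m - 1) := by
    have : 2 ≤ 2 ^ m := Nat.le_self_pow (by omega) 2
    rw [show (m + m) / 2 = m by omega]
    omega
  refine ⟨relabel e (walkNet (dualRail ∘ grayVec m) (2 ^ m - 1)), monotone_walkNet.relabel e,
    dualRail (grayVec m 0) ∘ e.symm, dualRail (grayVec m (2 ^ m - 1)) ∘ e.symm, ?_,
    ⟨_, (hg.pathLen_dualRail le_rfl).relabel e⟩,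
    fun l hp => hlen.trans (hg.two_mul_le_of_pathLen ((pathLen_relabel_iff e).mp hp))⟩
  rw [relabel_apply_comp_symm, hg.walkNet_dualRail le_rfl, min_eq_right (Nat.le_succ _)]
end

section
/- Let f : {0,1}^n → {0,1}^n with G(f) having no negative loops, and let f' : {0,1}^{2n} → {0,1}^{2n} be the monotone extension defined by: f'_i(x,y) = f_i(x) if y = x̄ or (ȳ)^i-flip = x̄; f'_i(x,y) = x̄_i if w(x)+w(y) = n and y ≠ x̄; f'_i(x,y) = 1 if w(x)+w(y) = n+1 and y with bit i flipped ≠ x̄, or if w(x)+w(y) ≥ n+2; f'_i(x,y) = 0 if w(x)+w(y) = n−1 and y with bit i flipped ≠ x̄, or if w(x)+w(y) ≤ n−2; and f'_{n+i}(x,y) = ¬ f'_i(ȳ, x̄). Then f' is monotone. -/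
/- ------------------- auxiliary lemmas ------------------- -/

lemma wt_negc {n : ℕ} (x : Fin n → Bool) : wt x + wt (negc x) = n := by
  unfold wt negc
  have h := Finset.card_filter_add_card_filter_not
    (s := (Finset.univ : Finset (Fin n))) (p := fun i => x i = true)
  have h2 : (Finset.univ.filter fun i => ¬ x i = true)
      = (Finset.univ.filter fun i => (!(x i)) = true) := by
    apply Finset.filter_congr; intro i _; simp
  rw [h2] at h
  simpa using h

lemma wt_update_true {n : ℕ} (x : Fin n → Bool) (j : Fin n) (h : x j = false) :
    wt (Function.update x j true) = wt x + 1 := by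
  unfold wt
  have h2 : (Finset.univ.filter fun k => Function.update x j true k = true)
      = insert j (Finset.univ.filter fun k => x k = true) := by
    ext k
    by_cases hk : k = j <;> simp [Function.update_apply, hk, h]
  rw [h2, Finset.card_insert_of_notMem (by simp [h])]

lemma wt_update_false {n : ℕ} (x : Fin n → Bool) (j : Fin n) (h : x j = true) :
    wt (Function.update x j false) + 1 = wt x := by
  have h0 : (Function.update x j false) j = false := by simp
  have h1 := wt_update_true (Function.update x j false) j h0
  have h2 : Function.update (Function.update x j false) j true = x := by
    funext k; by_cases hk : k = j <;> simp [Function.update_apply, hk, h]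
  rw [h2] at h1
  omega

lemma wt_flipAt_true {n : ℕ} (y : Fin n → Bool) (i : Fin n) (h : y i = true) :
    wt (flipAt y i) + 1 = wt y := by
  unfold flipAt; rw [h]; exact wt_update_false y i h

lemma wt_flipAt_false {n : ℕ} (y : Fin n → Bool) (i : Fin n) (h : y i = false) :
    wt (flipAt y i) = wt y + 1 := by
  unfold flipAt; rw [h]; exact wt_update_true y i h

lemma eq_negc_wt {n : ℕ} {x y : Fin n → Bool} (h : y = negc x) : wt x + wt y = n := by
  rw [h]; exact wt_negc x

lemma flip_eq_negc_xi {n : ℕ} {x y : Fin n → Bool} {i : Fin n}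
    (h : flipAt y i = negc x) : x i = y i := by
  have := congrFun h i
  simp [flipAt, negc] at this
  cases hx : x i <;> cases hy : y i <;> simp [hx, hy] at this ⊢

lemma flip_eq_negc_wt {n : ℕ} {x y : Fin n → Bool} {i : Fin n}
    (h : flipAt y i = negc x) :
    (y i = true ∧ wt x + wt y = n + 1) ∨ (y i = false ∧ wt x + wt y + 1 = n) := by
  have hw : wt x + wt (flipAt y i) = n := by rw [h]; exact wt_negc x
  cases hyi : y i
  · right; exact ⟨rfl, by have := wt_flipAt_false y i hyi; omega⟩
  · left; exact ⟨rfl, by have := wt_flipAt_true y i hyi; omega⟩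

lemma negc_update {n : ℕ} (x : Fin n → Bool) (j : Fin n) (b : Bool) :
    negc (Function.update x j b) = Function.update (negc x) j (!b) := by
  funext k; rcases eq_or_ne k j with hk | hk <;>
    simp [negc, Function.update_apply, hk]

lemma noNegLoop_step {n : ℕ} (f : (Fin n → Bool) → Fin n → Bool)
    (hf : NoNegLoop f) (x : Fin n → Bool) (i : Fin n) (h : x i = false) :
    f x i ≤ f (Function.update x i true) i := by
  rw [Bool.le_iff_imp]
  intro hx
  by_contra hx'
  have hx'' : f (Function.update x i true) i = false := by
    cases hv : f (Function.update x i true) i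
    · rfl
    · exact absurd hv hx'
  apply hf i
  refine ⟨x, hx'', ?_⟩
  have hxx : Function.update x i false = x := by
    funext k; by_cases hk : k = i <;> simp [Function.update_apply, hk, h]
  rw [hxx]; exact hx

lemma bnot_antitone : ∀ {b c : Bool}, b ≤ c → (!c) ≤ (!b) := by decide

lemma mono_of_step {n : ℕ} (g : (Fin n → Bool) → Bool)
    (hstep : ∀ x j, x j = false → g x ≤ g (Function.update x j true)) :
    Monotone g := by
  have key : ∀ (m : ℕ) (x y : Fin n → Bool), x ≤ y →
      (Finset.univ.filter fun k => ¬ x k = y k).card = m → g x ≤ g y := by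
    intro m
    induction m with
    | zero =>
      intro x y hxy hc
      have hxyeq : x = y := by
        funext k
        by_contra hk
        rw [Finset.card_eq_zero] at hc
        have : k ∈ Finset.univ.filter fun k => ¬ x k = y k := by simp [hk]
        rw [hc] at this
        exact absurd this (Finset.notMem_empty k)
      rw [hxyeq]
    | succ m ih =>
      intro x y hxy hc
      have hne : (Finset.univ.filter fun k => ¬ x k = y k).Nonempty := by
        rw [← Finset.card_pos, hc]; omega
      obtain ⟨j, hj⟩ := hne
      have hj' : ¬ x j = y j := by simpa using hj
      have hxj : x j = false ∧ y j = true := by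
        cases h1 : x j <;> cases h2 : y j
        · exact absurd (h1.trans h2.symm) hj'
        · exact ⟨rfl, rfl⟩
        · have hle := hxy j
          rw [h1, h2] at hle
          rw [Bool.le_iff_imp] at hle
          exact absurd (hle rfl) (by simp)
        · exact absurd (h1.trans h2.symm) hj'
      set x1 := Function.update x j true with hx1
      have hx1le : x1 ≤ y := by
        intro k
        rcases eq_or_ne k j with hk | hk
        · subst hk; simp [hx1, hxj.2]
        · simpa [hx1, Function.update_apply, hk] using hxy k
      have hcard : (Finset.univ.filter fun k => ¬ x1 k = y k).card = m := by
        have heq : (Finset.univ.filter fun k => ¬ x1 k = y k)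
            = (Finset.univ.filter fun k => ¬ x k = y k).erase j := by
          ext k
          rcases eq_or_ne k j with hk | hk
          · subst hk; simp [hx1, hxj.2]
          · simp [hx1, Function.update_apply, hk]
        rw [heq, Finset.card_erase_of_mem (by simpa using hj'), hc]
        omega
      exact le_trans (hstep x j hxj.1) (ih x1 y hx1le hcard)
  intro x y hxy
  exact key _ x y hxy rfl

/- ------------------- the two single-step lemmas ------------------- -/

lemma stepX {n : ℕ} (f : (Fin n → Bool) → Fin n → Bool) (hf : NoNegLoop f)
    (y : Fin n → Bool) (i : Fin n) :
    ∀ (x : Fin n → Bool) (j : Fin n), x j = false →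
      F1 f x y i ≤ F1 f (Function.update x j true) y i := by
  intro x j hxj
  set x' := Function.update x j true with hx'
  have hwx' : wt x' = wt x + 1 := wt_update_true x j hxj
  have hnx' : negc x' = Function.update (negc x) j false := by
    rw [hx', negc_update]; rfl
  rw [Bool.le_iff_imp]
  intro hF
  by_cases h1 : y = negc x
  · -- Case A : y = negc x
    have hw : wt x + wt y = n := eq_negc_wt h1
    have hval : F1 f x y i = f x i := by unfold F1; rw [if_pos (Or.inl h1)]
    rw [hval] at hF
    have hyj : y j = true := by rw [h1]; simp [negc, hxj]
    rcases eq_or_ne i j with hij | hij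
    · subst hij
      have hcond : flipAt y i = negc x' := by
        rw [hnx', h1]
        funext k
        rcases eq_or_ne k i with hk | hk
        · subst hk; simp [flipAt, ← h1, hyj]
        · simp [flipAt, Function.update_apply, hk]
      have hval' : F1 f x' y i = f x' i := by unfold F1; rw [if_pos (Or.inr hcond)]
      rw [hval']
      exact Bool.le_iff_imp.mp (noNegLoop_step f hf x i hxj) hF
    · have hc1 : ¬ (y = negc x' ∨ flipAt y i = negc x') := by
        rintro (h | h)
        · have hjj := congrFun h j
          rw [hnx'] at hjj
          simp [hyj] at hjj
        · have hjj := congrFun h j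
          rw [hnx'] at hjj
          simp [flipAt, Function.update_apply,
            (show j ≠ i from fun hh => hij hh.symm), hyj] at hjj
      have hval' : F1 f x' y i = true := by
        unfold F1
        rw [if_neg hc1, if_neg (show ¬ (wt x' + wt y = n) by omega),
          if_pos (show wt x' + wt y = n + 1 by omega)]
      rw [hval']
  · by_cases h2 : flipAt y i = negc x
    · -- Case B : flipAt y i = negc x
      have hxyi : x i = y i := flip_eq_negc_xi h2
      have hval : F1 f x y i = f x i := by unfold F1; rw [if_pos (Or.inr h2)]
      rw [hval] at hF
      rcases flip_eq_negc_wt h2 with ⟨hyi, hw⟩ | ⟨hyi, hw⟩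
      · -- y i = true, wt x + wt y = n + 1
        have hxi : x i = true := by rw [hxyi, hyi]
        have hc1 : ¬ (y = negc x' ∨ flipAt y i = negc x') := by
          rintro (h | h)
          · have := eq_negc_wt h; omega
          · have hwf : wt x' + wt (flipAt y i) = n := by rw [h]; exact wt_negc x'
            have := wt_flipAt_true y i hyi
            omega
        have hval' : F1 f x' y i = true := by
          unfold F1
          rw [if_neg hc1, if_neg (show ¬ (wt x' + wt y = n) by omega),
            if_neg (show ¬ (wt x' + wt y = n + 1) by omega),
            if_neg (show ¬ (wt x' + wt y + 1 = n) by omega),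
            if_pos (show n + 2 ≤ wt x' + wt y by omega)]
        rw [hval']
      · -- y i = false, wt x + wt y + 1 = n
        have hxi : x i = false := by rw [hxyi, hyi]
        rcases eq_or_ne i j with hij | hij
        · subst hij
          have hcond : y = negc x' := by
            rw [hnx', ← h2]
            funext k
            rcases eq_or_ne k i with hk | hk
            · subst hk; simp [flipAt, hyi]
            · simp [flipAt, Function.update_apply, hk]
          have hval' : F1 f x' y i = f x' i := by unfold F1; rw [if_pos (Or.inl hcond)]
          rw [hval']
          exact Bool.le_iff_imp.mp (noNegLoop_step f hf x i hxi) hF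
        · have hji : j ≠ i := fun hh => hij hh.symm
          have hyj : y j = true := by
            have := congrFun h2 j
            simp [flipAt, Function.update_apply, hji, negc, hxj] at this
            exact this
          have hc1 : ¬ (y = negc x' ∨ flipAt y i = negc x') := by
            rintro (h | h)
            · have hii := congrFun h i
              rw [hnx'] at hii
              simp [Function.update_apply, hij, negc, hxi, hyi] at hii
            · have hjj := congrFun h j
              rw [hnx'] at hjj
              simp [flipAt, Function.update_apply, hji, hyj] at hjj
          have hval' : F1 f x' y i = !(x' i) := by
            unfold F1
            rw [if_neg hc1, if_pos (show wt x' + wt y = n by omega)]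
          rw [hval', hx']
          simp [Function.update_apply, hij, hxi]
    · -- Case C–E : off-diagonal at x
      have hval : F1 f x y i =
          (if wt x + wt y = n then !(x i)
           else if wt x + wt y = n + 1 then true
           else if wt x + wt y + 1 = n then false
           else if n + 2 ≤ wt x + wt y then true
           else false) := by
        unfold F1
        rw [if_neg (by rintro (h | h); exacts [h1 h, h2 h])]
      rw [hval] at hF
      by_cases hwn : wt x + wt y = n
      · rw [if_pos hwn] at hF
        have hxi : x i = false := by
          cases hv : x i
          · rfl
          · rw [hv] at hF; exact absurd hF (by simp)
        have hc1 : ¬ (y = negc x' ∨ flipAt y i = negc x') := by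
          rintro (h | h)
          · have := eq_negc_wt h; omega
          · have hwf : wt x' + wt (flipAt y i) = n := by rw [h]; exact wt_negc x'
            cases hyi : y i
            · have := wt_flipAt_false y i hyi; omega
            · have hx'i : x' i = y i := flip_eq_negc_xi h
              rcases eq_or_ne i j with hij | hij
              · subst hij
                apply h1
                funext k
                rcases eq_or_ne k i with hk | hk
                · subst hk; rw [hyi]; simp [negc, hxj]
                · have hkk := congrFun h k
                  rw [hnx'] at hkk
                  simp [flipAt, Function.update_apply, hk] at hkk
                  rw [hkk]
              · rw [hx', Function.update_apply] at hx'i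
                simp [hij] at hx'i
                rw [hxi, hyi] at hx'i
                exact absurd hx'i (by simp)
        have hval' : F1 f x' y i = true := by
          unfold F1
          rw [if_neg hc1, if_neg (show ¬ (wt x' + wt y = n) by omega),
            if_pos (show wt x' + wt y = n + 1 by omega)]
        rw [hval']
      · rw [if_neg hwn] at hF
        by_cases hw1 : wt x + wt y = n + 1
        · have hc1 : ¬ (y = negc x' ∨ flipAt y i = negc x') := by
            rintro (h | h)
            · have := eq_negc_wt h; omega
            · have hwf : wt x' + wt (flipAt y i) = n := by rw [h]; exact wt_negc x'
              cases hyi : y i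
              · have := wt_flipAt_false y i hyi; omega
              · have := wt_flipAt_true y i hyi; omega
          have hval' : F1 f x' y i = true := by
            unfold F1
            rw [if_neg hc1, if_neg (show ¬ (wt x' + wt y = n) by omega),
              if_neg (show ¬ (wt x' + wt y = n + 1) by omega),
              if_neg (show ¬ (wt x' + wt y + 1 = n) by omega),
              if_pos (show n + 2 ≤ wt x' + wt y by omega)]
          rw [hval']
        · rw [if_neg hw1] at hF
          by_cases hw2 : wt x + wt y + 1 = n
          · rw [if_pos hw2] at hF; exact absurd hF (by simp)
          · rw [if_neg hw2] at hF
            by_cases hw3 : n + 2 ≤ wt x + wt y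
            · have hc1 : ¬ (y = negc x' ∨ flipAt y i = negc x') := by
                rintro (h | h)
                · have := eq_negc_wt h; omega
                · have hwf : wt x' + wt (flipAt y i) = n := by rw [h]; exact wt_negc x'
                  cases hyi : y i
                  · have := wt_flipAt_false y i hyi; omega
                  · have := wt_flipAt_true y i hyi; omega
              have hval' : F1 f x' y i = true := by
                unfold F1
                rw [if_neg hc1, if_neg (show ¬ (wt x' + wt y = n) by omega),
                  if_neg (show ¬ (wt x' + wt y = n + 1) by omega),
                  if_neg (show ¬ (wt x' + wt y + 1 = n) by omega),
                  if_pos (show n + 2 ≤ wt x' + wt y by omega)]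
              rw [hval']
            · rw [if_neg hw3] at hF; exact absurd hF (by simp)

lemma stepY {n : ℕ} (f : (Fin n → Bool) → Fin n → Bool)
    (x : Fin n → Bool) (i : Fin n) :
    ∀ (y : Fin n → Bool) (j : Fin n), y j = false →
      F1 f x y i ≤ F1 f x (Function.update y j true) i := by
  intro y j hyj
  set y' := Function.update y j true with hy'
  have hwy' : wt y' = wt y + 1 := wt_update_true y j hyj
  rw [Bool.le_iff_imp]
  intro hF
  by_cases h1 : y = negc x
  · -- Case A
    have hw : wt x + wt y = n := eq_negc_wt h1
    have hval : F1 f x y i = f x i := by unfold F1; rw [if_pos (Or.inl h1)]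
    rw [hval] at hF
    rcases eq_or_ne i j with hij | hij
    · subst hij
      have hcond : flipAt y' i = negc x := by
        rw [← h1]
        funext k
        rcases eq_or_ne k i with hk | hk
        · subst hk; simp [flipAt, hy', hyj]
        · simp [flipAt, hy', Function.update_apply, hk]
      have hval' : F1 f x y' i = f x i := by unfold F1; rw [if_pos (Or.inr hcond)]
      rw [hval']; exact hF
    · have hji : j ≠ i := fun hh => hij hh.symm
      have hc1 : ¬ (y' = negc x ∨ flipAt y' i = negc x) := by
        rintro (h | h)
        · have hjj := congrFun h j
          rw [← h1] at hjj
          simp [hy', hyj] at hjj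
        · have hjj := congrFun h j
          rw [← h1] at hjj
          simp [flipAt, hy', Function.update_apply, hji, hyj] at hjj
      have hval' : F1 f x y' i = true := by
        unfold F1
        rw [if_neg hc1, if_neg (show ¬ (wt x + wt y' = n) by omega),
          if_pos (show wt x + wt y' = n + 1 by omega)]
      rw [hval']
  · by_cases h2 : flipAt y i = negc x
    · -- Case B
      have hxyi : x i = y i := flip_eq_negc_xi h2
      have hval : F1 f x y i = f x i := by unfold F1; rw [if_pos (Or.inr h2)]
      rw [hval] at hF
      rcases flip_eq_negc_wt h2 with ⟨hyi, hw⟩ | ⟨hyi, hw⟩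
      · -- y i = true
        have hij : i ≠ j := fun hh => by rw [hh, hyj] at hyi; exact absurd hyi (by simp)
        have hji : j ≠ i := fun hh => hij hh.symm
        have hnxj : negc x j = false := by
          have := congrFun h2 j
          simp [flipAt, Function.update_apply, hji] at this
          rw [← this, hyj]
        have hc1 : ¬ (y' = negc x ∨ flipAt y' i = negc x) := by
          rintro (h | h)
          · have := eq_negc_wt h; omega
          · have hjj := congrFun h j
            simp [flipAt, hy', Function.update_apply, hji, hnxj] at hjj
        have hval' : F1 f x y' i = true := by
          unfold F1
          rw [if_neg hc1, if_neg (show ¬ (wt x + wt y' = n) by omega),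
            if_neg (show ¬ (wt x + wt y' = n + 1) by omega),
            if_neg (show ¬ (wt x + wt y' + 1 = n) by omega),
            if_pos (show n + 2 ≤ wt x + wt y' by omega)]
        rw [hval']
      · -- y i = false
        have hxi : x i = false := by rw [hxyi, hyi]
        rcases eq_or_ne i j with hij | hij
        · subst hij
          have hcond : y' = negc x := by
            rw [← h2]
            funext k
            rcases eq_or_ne k i with hk | hk
            · subst hk; simp [hy', flipAt, hyi]
            · simp [hy', flipAt, Function.update_apply, hk]
          have hval' : F1 f x y' i = f x i := by unfold F1; rw [if_pos (Or.inl hcond)]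
          rw [hval']; exact hF
        · have hji : j ≠ i := fun hh => hij hh.symm
          have hnxj : negc x j = false := by
            have := congrFun h2 j
            simp [flipAt, Function.update_apply, hji] at this
            rw [← this, hyj]
          have hc1 : ¬ (y' = negc x ∨ flipAt y' i = negc x) := by
            rintro (h | h)
            · have hii := congrFun h i
              simp [hy', Function.update_apply, hij, negc, hxi, hyi] at hii
            · have hjj := congrFun h j
              simp [flipAt, hy', Function.update_apply, hji, hnxj] at hjj
          have hval' : F1 f x y' i = !(x i) := by
            unfold F1
            rw [if_neg hc1, if_pos (show wt x + wt y' = n by omega)]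
          rw [hval', hxi]; rfl
    · -- Cases C–E : off-diagonal at (x, y)
      have hval : F1 f x y i =
          (if wt x + wt y = n then !(x i)
           else if wt x + wt y = n + 1 then true
           else if wt x + wt y + 1 = n then false
           else if n + 2 ≤ wt x + wt y then true
           else false) := by
        unfold F1
        rw [if_neg (by rintro (h | h); exacts [h1 h, h2 h])]
      rw [hval] at hF
      by_cases hwn : wt x + wt y = n
      · rw [if_pos hwn] at hF
        have hxi : x i = false := by
          cases hv : x i
          · rfl
          · rw [hv] at hF; exact absurd hF (by simp)
        have hc1 : ¬ (y' = negc x ∨ flipAt y' i = negc x) := by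
          rintro (h | h)
          · have := eq_negc_wt h; omega
          · have hwf : wt x + wt (flipAt y' i) = n := by rw [h]; exact wt_negc x
            cases hy'i : y' i
            · have := wt_flipAt_false y' i hy'i; omega
            · have hxy'i : x i = y' i := flip_eq_negc_xi h
              rw [hxi, hy'i] at hxy'i
              exact absurd hxy'i (by simp)
        have hval' : F1 f x y' i = true := by
          unfold F1
          rw [if_neg hc1, if_neg (show ¬ (wt x + wt y' = n) by omega),
            if_pos (show wt x + wt y' = n + 1 by omega)]
        rw [hval']
      · rw [if_neg hwn] at hF
        by_cases hw1 : wt x + wt y = n + 1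
        · have hc1 : ¬ (y' = negc x ∨ flipAt y' i = negc x) := by
            rintro (h | h)
            · have := eq_negc_wt h; omega
            · have hwf : wt x + wt (flipAt y' i) = n := by rw [h]; exact wt_negc x
              cases hy'i : y' i
              · have := wt_flipAt_false y' i hy'i; omega
              · have := wt_flipAt_true y' i hy'i; omega
          have hval' : F1 f x y' i = true := by
            unfold F1
            rw [if_neg hc1, if_neg (show ¬ (wt x + wt y' = n) by omega),
              if_neg (show ¬ (wt x + wt y' = n + 1) by omega),
              if_neg (show ¬ (wt x + wt y' + 1 = n) by omega),
              if_pos (show n + 2 ≤ wt x + wt y' by omega)]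
          rw [hval']
        · rw [if_neg hw1] at hF
          by_cases hw2 : wt x + wt y + 1 = n
          · rw [if_pos hw2] at hF; exact absurd hF (by simp)
          · rw [if_neg hw2] at hF
            by_cases hw3 : n + 2 ≤ wt x + wt y
            · have hc1 : ¬ (y' = negc x ∨ flipAt y' i = negc x) := by
                rintro (h | h)
                · have := eq_negc_wt h; omega
                · have hwf : wt x + wt (flipAt y' i) = n := by rw [h]; exact wt_negc x
                  cases hy'i : y' i
                  · have := wt_flipAt_false y' i hy'i; omega
                  · have := wt_flipAt_true y' i hy'i; omega
              have hval' : F1 f x y' i = true := by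
                unfold F1
                rw [if_neg hc1, if_neg (show ¬ (wt x + wt y' = n) by omega),
                  if_neg (show ¬ (wt x + wt y' = n + 1) by omega),
                  if_neg (show ¬ (wt x + wt y' + 1 = n) by omega),
                  if_pos (show n + 2 ≤ wt x + wt y' by omega)]
              rw [hval']
            · rw [if_neg hw3] at hF; exact absurd hF (by simp)

lemma F1_mono {n : ℕ} (f : (Fin n → Bool) → Fin n → Bool) (hf : NoNegLoop f)
    {x x' y y' : Fin n → Bool} (hx : x ≤ x') (hy : y ≤ y') (i : Fin n) :
    F1 f x y i ≤ F1 f x' y' i :=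
  le_trans
    (mono_of_step (fun u => F1 f u y i) (fun u j h => stepX f hf y i u j h) hx)
    (mono_of_step (fun v => F1 f x' v i) (fun v j h => stepY f x' i v j h) hy)

theorem stmt_6 {n : ℕ} (f : (Fin n → Bool) → Fin n → Bool)
    (hf : NoNegLoop f) : Monotone (Fext f) := by
  intro z z' hz
  have hxl : (z ∘ Sum.inl) ≤ (z' ∘ Sum.inl) := fun k => hz (Sum.inl k)
  have hxr : (z ∘ Sum.inr) ≤ (z' ∘ Sum.inr) := fun k => hz (Sum.inr k)
  have hnl : negc (z' ∘ Sum.inl) ≤ negc (z ∘ Sum.inl) := fun k => bnot_antitone (hxl k)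
  have hnr : negc (z' ∘ Sum.inr) ≤ negc (z ∘ Sum.inr) := fun k => bnot_antitone (hxr k)
  intro k
  rcases k with i | i
  · show F1 f (z ∘ Sum.inl) (z ∘ Sum.inr) i ≤ F1 f (z' ∘ Sum.inl) (z' ∘ Sum.inr) i
    exact F1_mono f hf hxl hxr i
  · show (!(F1 f (negc (z ∘ Sum.inr)) (negc (z ∘ Sum.inl)) i))
      ≤ (!(F1 f (negc (z' ∘ Sum.inr)) (negc (z' ∘ Sum.inl)) i))
    exact bnot_antitone (F1_mono f hf hnr hnl i)
end

section
/- With f' : {0,1}^{2n} → {0,1}^{2n} constructed from f as in the embedding construction, for all x ∈ {0,1}^n: f(x) = x if and only if f'(x, x̄) = (x, x̄). -/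
theorem stmt_7 {n : ℕ} (f : (Fin n → Bool) → Fin n → Bool)
    (x : Fin n → Bool) :
    f x = x ↔ Fext f (pair x (negc x)) = pair x (negc x) := by
  have hnn : negc (negc x) = x := by funext i; simp [negc]
  constructor
  · intro h
    funext z
    cases z with
    | inl i => simp [Fext, pair, F1, hnn, h]
    | inr i => simp [Fext, pair, F1, hnn, h, negc]
  · intro h
    funext i
    have := congrFun h (Sum.inl i)
    simpa [Fext, pair, F1, hnn] using this
end

section
/- Let f have no negative loop in its interaction graph, and f' be the embedding construction. For all x, y ∈ {0,1}^n, x → y is a transition of Γ(f) if and only if (x, x̄) → (y, x̄) → (y, ȳ) is a path in Γ(f'). -/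
lemma Fext_inl {n : ℕ} (f : (Fin n → Bool) → Fin n → Bool) (x y : Fin n → Bool) (i : Fin n) :
    Fext f (pair x y) (Sum.inl i) = F1 f x y i := rfl

lemma Fext_inr {n : ℕ} (f : (Fin n → Bool) → Fin n → Bool) (x y : Fin n → Bool) (i : Fin n) :
    Fext f (pair x y) (Sum.inr i) = !(F1 f (negc y) (negc x) i) := rfl

lemma negc_negc {n : ℕ} (x : Fin n → Bool) : negc (negc x) = x :=
  funext fun i => Bool.not_not _

lemma update_pair_left {n : ℕ} (x y : Fin n → Bool) (i : Fin n) (v : Bool) :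
    Function.update (pair x y) (Sum.inl i) v = pair (Function.update x i v) y := by
  funext z
  cases z with
  | inl j => by_cases h : j = i <;> simp [pair, Function.update, h]
  | inr j => simp [pair, Function.update]

lemma update_pair_right {n : ℕ} (x y : Fin n → Bool) (i : Fin n) (v : Bool) :
    Function.update (pair x y) (Sum.inr i) v = pair x (Function.update y i v) := by
  funext z
  cases z with
  | inl j => simp [pair, Function.update]
  | inr j => by_cases h : j = i <;> simp [pair, Function.update, h]

theorem stmt_10 {n : ℕ} (f : (Fin n → Bool) → Fin n → Bool)
    (hf : NoNegLoop f) (x y : Fin n → Bool) :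
    Step f x y ↔
      (Step (Fext f) (pair x (negc x)) (pair y (negc x)) ∧
       Step (Fext f) (pair y (negc x)) (pair y (negc y)))  := by
  constructor
  · rintro ⟨i, hne, hy⟩
    have hfx : f x i = !(x i) := by
      cases hx : x i <;> cases hf2 : f x i <;> simp_all
    have hF1 : F1 f x (negc x) i = f x i := by simp [F1]
    constructor
    · refine ⟨Sum.inl i, ?_, ?_⟩
      · rw [Fext_inl, hF1]; exact hne
      · rw [Fext_inl, hF1, update_pair_left, ← hy]
    · have hkey : flipAt (negc y) i = negc x := by
        funext j
        by_cases h : j = i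
        · subst h; simp [flipAt, negc, hy, hfx]
        · simp [flipAt, negc, hy, Function.update_of_ne h]
      have hF2 : F1 f x (negc y) i = f x i := by
        simp [F1, hkey]
      refine ⟨Sum.inr i, ?_, ?_⟩
      · rw [Fext_inr, negc_negc, hF2]
        show (!(f x i)) ≠ negc x i
        simp [negc, hfx]
      · rw [Fext_inr, negc_negc, hF2, update_pair_right]
        have : negc y = Function.update (negc x) i (!(f x i)) := by
          funext j
          by_cases h : j = i
          · subst h; simp [negc, hy, hfx]
          · simp [negc, hy, Function.update_of_ne h]
        rw [this]
  · rintro ⟨⟨j, hne1, heq1⟩, -⟩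
    cases j with
    | inr i =>
      exact absurd (congrFun heq1 (Sum.inr i)).symm (by simpa [pair] using hne1)
    | inl i =>
      have hF1 : F1 f x (negc x) i = f x i := by simp [F1]
      rw [Fext_inl, hF1] at hne1 heq1
      rw [update_pair_left] at heq1
      exact ⟨i, hne1, funext fun j => congrFun heq1 (Sum.inl j)⟩
end

section
/- Let f : {0,1}^n → {0,1}^n have no negative loops in G(f), and f' be the embedding construction. Then for all x, y ∈ {0,1}^n and ℓ ∈ ℕ: Γ(f) has a path from x to y of length ℓ if and only if Γ(f') has a path from (x, x̄) to (y, ȳ) of length 2ℓ. -/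
namespace Emb

variable {n : ℕ}

lemma negc_negc (x : Fin n → Bool) : negc (negc x) = x := by
  funext j; simp [negc]

lemma negc_inj {x y : Fin n → Bool} (h : negc x = negc y) : x = y := by
  have := congrArg negc h; rwa [negc_negc, negc_negc] at this

lemma wt_negc (x : Fin n → Bool) : wt x + wt (negc x) = n := by
  classical
  have h : (Finset.univ.filter fun i => negc x i = true)
      = (Finset.univ.filter fun i => ¬ (x i = true)) := by
    ext i; simp [negc]
  unfold wt
  rw [h, Finset.card_filter_add_card_filter_not]
  simp

lemma wt_update_true {x : Fin n → Bool} {i : Fin n} (h : x i = false) :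
    wt (Function.update x i true) = wt x + 1 := by
  classical
  unfold wt
  have he : (Finset.univ.filter fun j => Function.update x i true j = true)
      = insert i (Finset.univ.filter fun j => x j = true) := by
    ext j
    by_cases hj : j = i <;> simp [Function.update_apply, hj, h]
  rw [he, Finset.card_insert_of_notMem (by simp [h])]

lemma wt_update_false {x : Fin n → Bool} {i : Fin n} (h : x i = true) :
    wt (Function.update x i false) + 1 = wt x := by
  classical
  unfold wt
  have he : (Finset.univ.filter fun j => Function.update x i false j = true)
      = (Finset.univ.filter fun j => x j = true).erase i := by
    ext j
    by_cases hj : j = i <;> simp [Function.update_apply, hj, h]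
  rw [he, Finset.card_erase_add_one (by simp [h])]

lemma pair_inl (a b : Fin n → Bool) : pair a b ∘ Sum.inl = a := rfl
lemma pair_inr (a b : Fin n → Bool) : pair a b ∘ Sum.inr = b := rfl

lemma update_pair_inl (a b : Fin n → Bool) (i : Fin n) (v : Bool) :
    Function.update (pair a b) (Sum.inl i) v = pair (Function.update a i v) b := by
  funext c
  cases c with
  | inl j => by_cases hj : j = i <;> simp [pair, Function.update_apply, hj]
  | inr j => simp [pair, Function.update_apply]

lemma update_pair_inr (a b : Fin n → Bool) (i : Fin n) (v : Bool) :
    Function.update (pair a b) (Sum.inr i) v = pair a (Function.update b i v) := by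
  funext c
  cases c with
  | inl j => simp [pair, Function.update_apply]
  | inr j => by_cases hj : j = i <;> simp [pair, Function.update_apply, hj]

lemma update_negc (x : Fin n → Bool) (i : Fin n) (v : Bool) :
    Function.update (negc x) i (!v) = negc (Function.update x i v) := by
  funext k; by_cases hk : k = i <;> simp [negc, Function.update_apply, hk]

def Sz (z : (Fin n ⊕ Fin n) → Bool) : ℕ := wt (z ∘ Sum.inl) + wt (z ∘ Sum.inr)

lemma Sz_pair (a b : Fin n → Bool) : Sz (pair a b) = wt a + wt b := rfl

lemma Sz_update_true {z : (Fin n ⊕ Fin n) → Bool} {c : Fin n ⊕ Fin n} (h : z c = false) :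
    Sz (Function.update z c true) = Sz z + 1 := by
  cases c with
  | inl i =>
    have h1 : Function.update z (Sum.inl i) true ∘ Sum.inl
        = Function.update (z ∘ Sum.inl) i true := by
      funext j; by_cases hj : j = i <;> simp [Function.update_apply, hj]
    have h2 : Function.update z (Sum.inl i) true ∘ Sum.inr = z ∘ Sum.inr := by
      funext j; simp [Function.update_apply]
    unfold Sz
    rw [h1, h2, wt_update_true h]
    omega
  | inr i =>
    have h1 : Function.update z (Sum.inr i) true ∘ Sum.inr
        = Function.update (z ∘ Sum.inr) i true := by
      funext j; by_cases hj : j = i <;> simp [Function.update_apply, hj]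
    have h2 : Function.update z (Sum.inr i) true ∘ Sum.inl = z ∘ Sum.inl := by
      funext j; simp [Function.update_apply]
    unfold Sz
    rw [h1, h2, wt_update_true h]
    omega

lemma Sz_update_false {z : (Fin n ⊕ Fin n) → Bool} {c : Fin n ⊕ Fin n} (h : z c = true) :
    Sz (Function.update z c false) + 1 = Sz z := by
  cases c with
  | inl i =>
    have h1 : Function.update z (Sum.inl i) false ∘ Sum.inl
        = Function.update (z ∘ Sum.inl) i false := by
      funext j; by_cases hj : j = i <;> simp [Function.update_apply, hj]
    have h2 : Function.update z (Sum.inl i) false ∘ Sum.inr = z ∘ Sum.inr := by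
      funext j; simp [Function.update_apply]
    unfold Sz
    rw [h1, h2]
    have := wt_update_false (x := z ∘ Sum.inl) (i := i) h
    omega
  | inr i =>
    have h1 : Function.update z (Sum.inr i) false ∘ Sum.inr
        = Function.update (z ∘ Sum.inr) i false := by
      funext j; by_cases hj : j = i <;> simp [Function.update_apply, hj]
    have h2 : Function.update z (Sum.inr i) false ∘ Sum.inl = z ∘ Sum.inl := by
      funext j; simp [Function.update_apply]
    unfold Sz
    rw [h1, h2]
    have := wt_update_false (x := z ∘ Sum.inr) (i := i) h
    omega

variable {n : ℕ} {f : (Fin n → Bool) → Fin n → Bool}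

lemma wt_flip_eq {x y : Fin n → Bool} {j : Fin n} (h : flipAt y j = negc x) :
    wt x + wt y = n + 1 ∨ wt x + wt y + 1 = n := by
  have hn : wt x + wt (flipAt y j) = n := by rw [h]; exact wt_negc x
  cases hyj : y j with
  | true =>
    have he : flipAt y j = Function.update y j false := by simp [flipAt, hyj]
    have := wt_update_false (x := y) (i := j) hyj
    rw [he] at hn
    left; omega
  | false =>
    have he : flipAt y j = Function.update y j true := by simp [flipAt, hyj]
    have := wt_update_true (x := y) (i := j) hyj
    rw [he] at hn
    right; omega

lemma F1_high {x y : Fin n → Bool} {j : Fin n} (h : n + 2 ≤ wt x + wt y) :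
    F1 f x y j = true := by
  have hw := wt_negc x
  have hc : ¬ (y = negc x ∨ flipAt y j = negc x) := by
    rintro (h1 | h2)
    · subst h1; omega
    · rcases wt_flip_eq h2 with h3 | h3 <;> omega
  unfold F1
  rw [if_neg hc, if_neg (by omega), if_neg (by omega), if_neg (by omega), if_pos h]

lemma F1_low {x y : Fin n → Bool} {j : Fin n} (h : wt x + wt y + 2 ≤ n) :
    F1 f x y j = false := by
  have hw := wt_negc x
  have hc : ¬ (y = negc x ∨ flipAt y j = negc x) := by
    rintro (h1 | h2)
    · subst h1; omega
    · rcases wt_flip_eq h2 with h3 | h3 <;> omega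
  unfold F1
  rw [if_neg hc, if_neg (by omega), if_neg (by omega), if_neg (by omega), if_neg (by omega)]

lemma Fext_inl (z : (Fin n ⊕ Fin n) → Bool) (j : Fin n) :
    Fext f z (Sum.inl j) = F1 f (z ∘ Sum.inl) (z ∘ Sum.inr) j := rfl

lemma Fext_inr (z : (Fin n ⊕ Fin n) → Bool) (j : Fin n) :
    Fext f z (Sum.inr j) = !(F1 f (negc (z ∘ Sum.inr)) (negc (z ∘ Sum.inl)) j) := rfl

lemma Fext_high {z : (Fin n ⊕ Fin n) → Bool} (h : n + 2 ≤ Sz z) (c : Fin n ⊕ Fin n) :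
    Fext f z c = true := by
  have h1 := wt_negc (z ∘ Sum.inl)
  have h2 := wt_negc (z ∘ Sum.inr)
  have h' : n + 2 ≤ wt (z ∘ Sum.inl) + wt (z ∘ Sum.inr) := h
  cases c with
  | inl j => rw [Fext_inl]; exact F1_high h'
  | inr j => rw [Fext_inr, F1_low (by omega)]; rfl

lemma Fext_low {z : (Fin n ⊕ Fin n) → Bool} (h : Sz z + 2 ≤ n) (c : Fin n ⊕ Fin n) :
    Fext f z c = false := by
  have h1 := wt_negc (z ∘ Sum.inl)
  have h2 := wt_negc (z ∘ Sum.inr)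
  have h' : wt (z ∘ Sum.inl) + wt (z ∘ Sum.inr) + 2 ≤ n := h
  cases c with
  | inl j => rw [Fext_inl]; exact F1_low h'
  | inr j => rw [Fext_inr, F1_high (by omega)]; rfl

lemma stepHigh {z z' : (Fin n ⊕ Fin n) → Bool} (h : n + 2 ≤ Sz z)
    (hs : Step (Fext f) z z') : n + 2 ≤ Sz z' := by
  obtain ⟨c, hne, hz'⟩ := hs
  rw [Fext_high h c] at hne hz'
  have hzc : z c = false := by cases h0 : z c <;> simp_all
  rw [hz', Sz_update_true hzc]
  omega

lemma stepLow {z z' : (Fin n ⊕ Fin n) → Bool} (h : Sz z + 2 ≤ n)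
    (hs : Step (Fext f) z z') : Sz z' + 2 ≤ n := by
  obtain ⟨c, hne, hz'⟩ := hs
  rw [Fext_low h c] at hne hz'
  have hzc : z c = true := by cases h0 : z c <;> simp_all
  have := Sz_update_false hzc
  rw [hz']
  omega

lemma pathHigh {p : ℕ → (Fin n ⊕ Fin n) → Bool} {m : ℕ}
    (hs : ∀ k < m, Step (Fext f) (p k) (p (k + 1))) (h0 : n + 2 ≤ Sz (p 0)) :
    n + 2 ≤ Sz (p m) := by
  induction m with
  | zero => exact h0
  | succ m ih => exact stepHigh (ih fun k hk => hs k (by omega)) (hs m (by omega))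

lemma pathLow {p : ℕ → (Fin n ⊕ Fin n) → Bool} {m : ℕ}
    (hs : ∀ k < m, Step (Fext f) (p k) (p (k + 1))) (h0 : Sz (p 0) + 2 ≤ n) :
    Sz (p m) + 2 ≤ n := by
  induction m with
  | zero => exact h0
  | succ m ih => exact stepLow (ih fun k hk => hs k (by omega)) (hs m (by omega))

lemma bool_ne {a b : Bool} (h : a ≠ b) : a = !b := by
  cases a <;> cases b <;> simp_all

lemma flipAt_negc (y : Fin n → Bool) (j : Fin n) :
    flipAt (negc y) j = negc (flipAt y j) := by
  funext k; by_cases hk : k = j <;> simp [flipAt, negc, Function.update_apply, hk]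

section core

variable {x : Fin n → Bool} {i : Fin n}

lemma e_flip (hfx : f x i ≠ x i) : flipAt x i = Function.update x i (f x i) := by
  rw [flipAt, bool_ne hfx]

lemma e1 (hfx : f x i ≠ x i) : Function.update x i (f x i) i = !(x i) := by
  rw [Function.update_self, bool_ne hfx]

lemma e3 (hfx : f x i ≠ x i) : flipAt (Function.update x i (f x i)) i = x := by
  funext k
  by_cases hk : k = i
  · subst hk
    simp [flipAt, e1 hfx, bool_ne hfx]
  · rw [flipAt, Function.update_of_ne hk, Function.update_of_ne hk]

lemma condA (hfx : f x i ≠ x i) (j : Fin n) :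
    (negc x = negc (Function.update x i (f x i)) ∨
      flipAt (negc x) j = negc (Function.update x i (f x i))) ↔ j = i := by
  constructor
  · rintro (h1 | h2)
    · exfalso
      have hx := negc_inj h1
      have := congrFun hx i
      rw [e1 hfx] at this
      simp at this
    · have hx : flipAt x j = Function.update x i (f x i) :=
        negc_inj (by rw [← flipAt_negc]; exact h2)
      by_contra hj
      have := congrFun hx i
      rw [flipAt, Function.update_of_ne (Ne.symm hj), e1 hfx] at this
      simp at this
  · rintro rfl
    right
    rw [flipAt_negc, e_flip hfx]

lemma condB (hfx : f x i ≠ x i) (j : Fin n) :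
    (negc (Function.update x i (f x i)) = negc x ∨
      flipAt (negc (Function.update x i (f x i))) j = negc x) ↔ j = i := by
  constructor
  · rintro (h1 | h2)
    · exfalso
      have hx := negc_inj h1
      have := congrFun hx i
      rw [e1 hfx] at this
      simp at this
    · have hx : flipAt (Function.update x i (f x i)) j = x :=
        negc_inj (by rw [← flipAt_negc]; exact h2)
      by_contra hj
      have := congrFun hx i
      rw [flipAt, Function.update_of_ne (Ne.symm hj), e1 hfx] at this
      simp at this
  · rintro rfl
    right
    rw [flipAt_negc, e3 hfx]

lemma F1_mirror (x : Fin n → Bool) (j : Fin n) : F1 f x (negc x) j = f x j := by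
  unfold F1; rw [if_pos (Or.inl rfl)]

lemma wtA_true (hfx : f x i ≠ x i) (hxi : x i = true) :
    wt (Function.update x i (f x i)) + 1 = wt x := by
  have he : Function.update x i (f x i) = Function.update x i false := by
    simp [bool_ne hfx, hxi]
  rw [he]
  exact wt_update_false hxi

lemma wtA_false (hfx : f x i ≠ x i) (hxi : x i = false) :
    wt (Function.update x i (f x i)) = wt x + 1 := by
  have he : Function.update x i (f x i) = Function.update x i true := by
    simp [bool_ne hfx, hxi]
  rw [he]
  exact wt_update_true hxi

lemma F1_A_diag (hf : NoNegLoop f) (hfx : f x i ≠ x i) :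
    F1 f (Function.update x i (f x i)) (negc x) i = Function.update x i (f x i) i := by
  unfold F1
  rw [if_pos ((condA hfx i).mpr rfl)]
  by_contra hcon
  have h2 : f (Function.update x i (f x i)) i = x i := by
    have h3 := bool_ne hcon
    rw [e1 hfx, Bool.not_not] at h3
    exact h3
  apply hf i
  cases hxi : x i with
  | true =>
    refine ⟨x, ?_, ?_⟩
    · have hx : Function.update x i true = x := by rw [← hxi]; exact Function.update_eq_self i x
      rw [hx, bool_ne hfx, hxi]; rfl
    · have hx' : Function.update x i false = Function.update x i (f x i) := by
        rw [bool_ne hfx, hxi]; rfl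
      rw [hx', h2, hxi]
  | false =>
    refine ⟨x, ?_, ?_⟩
    · have hx' : Function.update x i true = Function.update x i (f x i) := by
        rw [bool_ne hfx, hxi]; rfl
      rw [hx', h2, hxi]
    · have hx : Function.update x i false = x := by rw [← hxi]; exact Function.update_eq_self i x
      rw [hx, bool_ne hfx, hxi]; rfl

lemma F1_A_off (hfx : f x i ≠ x i) {j : Fin n} (hj : j ≠ i) :
    F1 f (Function.update x i (f x i)) (negc x) j = !(x i) := by
  unfold F1
  rw [if_neg (by rw [condA hfx j]; exact hj)]
  have hw := wt_negc x
  cases hxi : x i with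
  | true =>
    have h1 := wtA_true hfx hxi
    rw [if_neg (by omega), if_neg (by omega), if_pos (by omega)]
    rfl
  | false =>
    have h1 := wtA_false hfx hxi
    rw [if_neg (by omega), if_pos (by omega)]
    rfl

lemma F1_B_diag (hfx : f x i ≠ x i) :
    F1 f x (negc (Function.update x i (f x i))) i = f x i := by
  unfold F1
  rw [if_pos ((condB hfx i).mpr rfl)]

lemma F1_B_off (hfx : f x i ≠ x i) {j : Fin n} (hj : j ≠ i) :
    F1 f x (negc (Function.update x i (f x i))) j = x i := by
  unfold F1
  rw [if_neg (by rw [condB hfx j]; exact hj)]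
  have hw := wt_negc (Function.update x i (f x i))
  cases hxi : x i with
  | true =>
    have h1 := wtA_true hfx hxi
    rw [if_neg (by omega), if_pos (by omega)]
  | false =>
    have h1 := wtA_false hfx hxi
    rw [if_neg (by omega), if_neg (by omega), if_pos (by omega)]

end core
lemma offdead {w z' : (Fin n ⊕ Fin n) → Bool} {c : Fin n ⊕ Fin n} {v : Bool}
    (hne : v ≠ w c) (hz' : z' = Function.update w c v)
    (hcorr : (v = true ∧ Sz w = n + 1) ∨ (v = false ∧ Sz w + 1 = n)) :
    n + 2 ≤ Sz z' ∨ Sz z' + 2 ≤ n := by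
  rcases hcorr with ⟨hv, hw⟩ | ⟨hv, hw⟩
  · subst hv
    have hc : w c = false := by cases h : w c <;> simp_all
    left; rw [hz', Sz_update_true hc]; omega
  · subst hv
    have hc : w c = true := by cases h : w c <;> simp_all
    right
    have := Sz_update_false (z := w) (c := c) hc
    rw [hz']; omega

section core2

variable {x : Fin n → Bool} {i : Fin n}

lemma stepA (hf : NoNegLoop f) (hfx : f x i ≠ x i)
    {z' : (Fin n ⊕ Fin n) → Bool}
    (hs : Step (Fext f) (pair (Function.update x i (f x i)) (negc x)) z') :
    z' = pair (Function.update x i (f x i)) (negc (Function.update x i (f x i))) ∨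
      n + 2 ≤ Sz z' ∨ Sz z' + 2 ≤ n := by
  obtain ⟨c, hne, hz'⟩ := hs
  have hw1 := wt_negc x
  have hw2 := wt_negc (Function.update x i (f x i))
  have hSz : Sz (pair (Function.update x i (f x i)) (negc x))
      = wt (Function.update x i (f x i)) + wt (negc x) := Sz_pair _ _
  cases c with
  | inl j =>
    have hval : Fext f (pair (Function.update x i (f x i)) (negc x)) (Sum.inl j)
        = F1 f (Function.update x i (f x i)) (negc x) j := by
      rw [Fext_inl, pair_inl, pair_inr]
    by_cases hj : j = i
    · subst hj
      rw [hval, F1_A_diag hf hfx] at hne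
      exact absurd rfl hne
    · rw [hval, F1_A_off hfx hj] at hne hz'
      right
      refine offdead hne hz' ?_
      cases hxi : x i with
      | true =>
        right
        exact ⟨rfl, by have := wtA_true hfx hxi; omega⟩
      | false =>
        left
        exact ⟨rfl, by have := wtA_false hfx hxi; omega⟩
  | inr j =>
    have hval : Fext f (pair (Function.update x i (f x i)) (negc x)) (Sum.inr j)
        = !(F1 f x (negc (Function.update x i (f x i))) j) := by
      rw [Fext_inr, pair_inl, pair_inr, negc_negc]
    by_cases hj : j = i
    · subst hj
      rw [hval, F1_B_diag hfx] at hz'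
      left
      rw [hz', update_pair_inr, update_negc]
    · rw [hval, F1_B_off hfx hj] at hne hz'
      right
      refine offdead hne hz' ?_
      cases hxi : x i with
      | true =>
        right
        exact ⟨rfl, by have := wtA_true hfx hxi; omega⟩
      | false =>
        left
        exact ⟨rfl, by have := wtA_false hfx hxi; omega⟩

lemma stepB (hf : NoNegLoop f) (hfx : f x i ≠ x i)
    {z' : (Fin n ⊕ Fin n) → Bool}
    (hs : Step (Fext f) (pair x (negc (Function.update x i (f x i)))) z') :
    z' = pair (Function.update x i (f x i)) (negc (Function.update x i (f x i))) ∨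
      n + 2 ≤ Sz z' ∨ Sz z' + 2 ≤ n := by
  obtain ⟨c, hne, hz'⟩ := hs
  have hw1 := wt_negc x
  have hw2 := wt_negc (Function.update x i (f x i))
  have hSz : Sz (pair x (negc (Function.update x i (f x i))))
      = wt x + wt (negc (Function.update x i (f x i))) := Sz_pair _ _
  cases c with
  | inl j =>
    have hval : Fext f (pair x (negc (Function.update x i (f x i)))) (Sum.inl j)
        = F1 f x (negc (Function.update x i (f x i))) j := by
      rw [Fext_inl, pair_inl, pair_inr]
    by_cases hj : j = i
    · subst hj
      rw [hval, F1_B_diag hfx] at hz'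
      left
      rw [hz', update_pair_inl]
    · rw [hval, F1_B_off hfx hj] at hne hz'
      right
      refine offdead hne hz' ?_
      cases hxi : x i with
      | true =>
        left
        exact ⟨rfl, by have := wtA_true hfx hxi; omega⟩
      | false =>
        right
        exact ⟨rfl, by have := wtA_false hfx hxi; omega⟩
  | inr j =>
    have hval : Fext f (pair x (negc (Function.update x i (f x i)))) (Sum.inr j)
        = !(F1 f (Function.update x i (f x i)) (negc x) j) := by
      rw [Fext_inr, pair_inl, pair_inr, negc_negc]
    by_cases hj : j = i
    · subst hj
      rw [hval, F1_A_diag hf hfx] at hne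
      exact absurd rfl hne
    · rw [hval, F1_A_off hfx hj] at hne hz'
      right
      refine offdead hne hz' ?_
      cases hxi : x i with
      | true =>
        left
        exact ⟨rfl, by have := wtA_true hfx hxi; omega⟩
      | false =>
        right
        exact ⟨rfl, by have := wtA_false hfx hxi; omega⟩

end core2
lemma Fext_mirror (x : Fin n → Bool) :
    Fext f (pair x (negc x)) = pair (f x) (negc (f x)) := by
  funext c
  cases c with
  | inl j =>
    have h : Fext f (pair x (negc x)) (Sum.inl j) = F1 f x (negc x) j := by
      rw [Fext_inl, pair_inl, pair_inr]
    rw [h, F1_mirror]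
    rfl
  | inr j =>
    have h : Fext f (pair x (negc x)) (Sum.inr j) = !(F1 f x (negc x) j) := by
      rw [Fext_inr, pair_inl, pair_inr, negc_negc]
    rw [h, F1_mirror]
    rfl

lemma stepMirror {x₀ : Fin n → Bool} {z' : (Fin n ⊕ Fin n) → Bool}
    (hs : Step (Fext f) (pair x₀ (negc x₀)) z') :
    ∃ i, f x₀ i ≠ x₀ i ∧
      (z' = pair (Function.update x₀ i (f x₀ i)) (negc x₀) ∨
       z' = pair x₀ (negc (Function.update x₀ i (f x₀ i)))) := by
  obtain ⟨c, hne, hz'⟩ := hs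
  rw [Fext_mirror] at hne hz'
  cases c with
  | inl j =>
    refine ⟨j, hne, Or.inl ?_⟩
    rw [hz', update_pair_inl]
    rfl
  | inr j =>
    have hne' : f x₀ j ≠ x₀ j := by
      intro h
      apply hne
      show negc (f x₀) j = negc x₀ j
      rw [negc, negc, h]
    refine ⟨j, hne', Or.inr ?_⟩
    rw [hz', update_pair_inr]
    show pair x₀ (Function.update (negc x₀) j (!(f x₀ j)))
        = pair x₀ (negc (Function.update x₀ j (f x₀ j)))
    rw [update_negc]

lemma pathLen_trans {I : Type*} [DecidableEq I] {g : (I → Bool) → I → Bool}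
    {x z y : I → Bool} {a b : ℕ}
    (h1 : PathLen g x z a) (h2 : PathLen g z y b) : PathLen g x y (a + b) := by
  obtain ⟨p, hp0, hpa, hps⟩ := h1
  obtain ⟨q, hq0, hqb, hqs⟩ := h2
  refine ⟨fun k => if k < a then p k else q (k - a), ?_, ?_, ?_⟩
  · by_cases h : 0 < a
    · simp only [h, if_pos]; exact hp0
    · have ha : a = 0 := by omega
      subst ha
      show (if 0 < 0 then p 0 else q (0 - 0)) = x
      rw [if_neg h, Nat.sub_zero, hq0, ← hpa, hp0]
  · have h : ¬ (a + b < a) := by omega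
    simp only [h, if_neg, Nat.add_sub_cancel_left]
    exact hqb
  · intro k hk
    by_cases h1 : k + 1 < a
    · have hk' : k < a := by omega
      simp only [h1, hk', if_pos]
      exact hps k hk'
    · by_cases h2 : k < a
      · have hk1 : k + 1 = a := by omega
        simp only [h1, h2, if_pos, if_neg]
        have : q (k + 1 - a) = p (k + 1) := by
          rw [hk1, Nat.sub_self, hq0, ← hpa]
        rw [this]
        exact hps k h2
      · simp only [h1, h2, if_neg]
        have he : k + 1 - a = (k - a) + 1 := by omega
        rw [he]
        exact hqs (k - a) (by omega)

lemma pathLen_cons {I : Type*} [DecidableEq I] {g : (I → Bool) → I → Bool}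
    {x x' y : I → Bool} {m : ℕ}
    (h1 : Step g x x') (h2 : PathLen g x' y m) : PathLen g x y (m + 1) := by
  have hone : PathLen g x x' 1 := by
    refine ⟨fun k => if k = 0 then x else x', by simp, by simp, ?_⟩
    intro k hk
    interval_cases k
    simpa using h1
  have := pathLen_trans hone h2
  rwa [Nat.add_comm] at this

lemma step_two {a b : Fin n → Bool} (h : Step f a b) :
    PathLen (Fext f) (pair a (negc a)) (pair b (negc b)) 2 := by
  obtain ⟨i, hfi, hb⟩ := h
  subst hb
  refine ⟨fun k => if k = 0 then pair a (negc a)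
    else if k = 1 then Function.update (pair a (negc a)) (Sum.inl i) (f a i)
    else pair (Function.update a i (f a i)) (negc (Function.update a i (f a i))),
    by simp, by simp, ?_⟩
  intro k hk
  interval_cases k
  · norm_num
    refine ⟨Sum.inl i, ?_, ?_⟩
    · rw [Fext_mirror]
      exact hfi
    · rw [Fext_mirror]
      rfl
  · norm_num
    have hw : Function.update (pair a (negc a)) (Sum.inl i) (f a i)
        = pair (Function.update a i (f a i)) (negc a) := update_pair_inl a (negc a) i (f a i)
    rw [hw]
    refine ⟨Sum.inr i, ?_, ?_⟩
    · have hval : Fext f (pair (Function.update a i (f a i)) (negc a)) (Sum.inr i)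
          = !(F1 f a (negc (Function.update a i (f a i))) i) := by
        rw [Fext_inr, pair_inl, pair_inr, negc_negc]
      rw [hval, F1_B_diag hfi]
      show ¬ (!(f a i)) = !(a i)
      simp
      exact hfi
    · have hval : Fext f (pair (Function.update a i (f a i)) (negc a)) (Sum.inr i)
          = !(F1 f a (negc (Function.update a i (f a i))) i) := by
        rw [Fext_inr, pair_inl, pair_inr, negc_negc]
      rw [hval, F1_B_diag hfi, update_pair_inr, update_negc]

lemma forward {l : ℕ} {x y : Fin n → Bool} (h : PathLen f x y l) :
    PathLen (Fext f) (pair x (negc x)) (pair y (negc y)) (2 * l) := by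
  induction l generalizing x with
  | zero =>
    obtain ⟨p, h0, hl, _⟩ := h
    have hxy : x = y := by rw [← h0, hl]
    subst hxy
    exact ⟨fun _ => pair x (negc x), rfl, rfl, by omega⟩
  | succ l ih =>
    obtain ⟨p, h0, hl, hs⟩ := h
    have hstep : Step f x (p 1) := by
      have := hs 0 (by omega)
      rwa [h0] at this
    have hrest : PathLen f (p 1) y l :=
      ⟨fun k => p (k + 1), rfl, hl, fun k hk => hs (k + 1) (by omega)⟩
    have h2 := step_two hstep
    have h3 := pathLen_trans h2 (ih hrest)
    have he : 2 + 2 * l = 2 * (l + 1) := by omega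
    rwa [he] at h3

lemma backward (hf : NoNegLoop f) :
    ∀ (l : ℕ) (x y : Fin n → Bool) (p : ℕ → (Fin n ⊕ Fin n) → Bool),
      p 0 = pair x (negc x) → p (2 * l) = pair y (negc y) →
      (∀ k < 2 * l, Step (Fext f) (p k) (p (k + 1))) → PathLen f x y l := by
  intro l
  induction l with
  | zero =>
    intro x y p h0 hend _
    have hpair : pair x (negc x) = pair y (negc y) := by
      rw [← h0, ← hend]
    have hxy : x = y := by
      funext j
      exact congrFun hpair (Sum.inl j)
    exact ⟨fun _ => x, rfl, hxy ▸ rfl, by omega⟩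
  | succ l ih =>
    intro x y p h0 hend hsteps
    have hs0 := hsteps 0 (by omega)
    have hs1 := hsteps 1 (by omega)
    rw [h0] at hs0
    obtain ⟨i, hfi, hcase⟩ := stepMirror hs0
    have hZend : Sz (p (2 * (l + 1))) = n := by
      rw [hend, Sz_pair]
      exact wt_negc y
    have hkey : p 2 = pair (Function.update x i (f x i)) (negc (Function.update x i (f x i)))
        ∨ n + 2 ≤ Sz (p 2) ∨ Sz (p 2) + 2 ≤ n := by
      rcases hcase with h1 | h1 <;> rw [h1] at hs1
      · exact stepA hf hfi hs1
      · exact stepB hf hfi hs1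
    rcases hkey with hmir | hdead | hdead
    · have hpath := ih (Function.update x i (f x i)) y (fun k => p (k + 2))
        hmir
        (by show p (2 * l + 2) = _
            rw [show 2 * l + 2 = 2 * (l + 1) from by omega]
            exact hend)
        (fun k hk => hsteps (k + 2) (by omega))
      exact pathLen_cons ⟨i, hfi, rfl⟩ hpath
    · exfalso
      have := pathHigh (p := fun k => p (k + 2)) (m := 2 * l)
        (fun k hk => hsteps (k + 2) (by omega)) hdead
      have h2 : n + 2 ≤ Sz (p (2 * l + 2)) := this
      rw [show 2 * l + 2 = 2 * (l + 1) from by omega] at h2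
      omega
    · exfalso
      have := pathLow (p := fun k => p (k + 2)) (m := 2 * l)
        (fun k hk => hsteps (k + 2) (by omega)) hdead
      have h2 : Sz (p (2 * l + 2)) + 2 ≤ n := this
      rw [show 2 * l + 2 = 2 * (l + 1) from by omega] at h2
      omega
end Emb
theorem stmt_12 {n : ℕ} (f : (Fin n → Bool) → Fin n → Bool)
    (hf : NoNegLoop f) (x y : Fin n → Bool) (l : ℕ) :
    PathLen f x y l ↔
      PathLen (Fext f) (pair x (negc x)) (pair y (negc y)) (2 * l) := by
  constructor
  · exact fun h => Emb.forward h
  · rintro ⟨p, h0, h2l, hs⟩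
    exact Emb.backward hf l x y p h0 h2l hs
end
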